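/- arXiv:2511.20212 — 5 statements merged into one kernel-verified Lean document; each statement's English description precedes it below -/
import Mathlib

section
/- Fix an edge {u,v} of H, a real number φ, and real mixer angles β_1,…,β_p with β_p = π/4. Define the contribution of a layered spin configuration z by Contr(z) = z_u^[0] · z_v^[0] · exp(i·φ·D(z)) · Π_{x∈V} f(z_x). Let q ∈ V and let flip_q z denote the configuration equal to z except that the layer-0 sign of q is negated. Then: (1) if q ∉ {u,v} and z_q^[p] ≠ z_q^[−p], then Contr(flip_q z) = −Contr(z); (2) if q ∈ {u,v} and z_q^[p] = z_q^[−p], then Contr(flip_q z) = −Contr(z); (3) in all remaining cases (q ∉ {u,v} with z_q^[p] = z_q^[−p], or q ∈ {u,v} with z_q^[p] ≠ z_q^[−p]), Contr(flip_q z) = Contr(z). -/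
/-!
STATEMENT 1: endpoint-consistency lemma. Flipping the layer-0 spin of a vertex q
either negates the contribution Contr(z) (cases 1 and 2) or leaves it unchanged
(case 3), when β_p = π/4. Spins are ℤˣ = {1,-1}; layers -p..p are encoded as
Fin (2p+1) via j ↦ j + p.
-/
namespace QAOA

/-- Map a layer index `j ∈ {-p,…,p}` to an index in `Fin (2p+1)` (via `j ↦ j + p`). -/
def lay (p : ℕ) (j : ℤ) : Fin (2 * p + 1) :=
  ⟨(j + p).toNat % (2 * p + 1), Nat.mod_lt _ (by omega)⟩

/-- One-qubit mixer matrix element `m(β; a, b)`: `cos β` if `a = b`, `i sin β` otherwise. -/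
noncomputable def mElem (β : ℝ) (a b : ℤˣ) : ℂ :=
  if a = b then (Real.cos β : ℂ) else Complex.I * (Real.sin β : ℂ)

/-- Conjugated mixer matrix element `m̄(β; a, b)`: `cos β` if `a = b`, `-i sin β` otherwise. -/
noncomputable def mElemBar (β : ℝ) (a b : ℤˣ) : ℂ :=
  if a = b then (Real.cos β : ℂ) else -(Complex.I * (Real.sin β : ℂ))

/-- The one-site kernel `f(z_x)` of a vertex, given its layered spins
`zx : Fin (2p+1) → ℤˣ` and the mixer angles `β`. -/
noncomputable def kernel (p : ℕ) (β : ℕ → ℝ) (zx : Fin (2 * p + 1) → ℤˣ) : ℂ :=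
  (1 / 2 : ℂ)
    * (∏ ℓ ∈ Finset.Icc 1 (p - 1), mElem (β ℓ) (zx (lay p ℓ)) (zx (lay p (ℓ + 1))))
    * mElem (β p) (zx (lay p p)) (zx (lay p 0))
    * mElemBar (β p) (zx (lay p 0)) (zx (lay p (-(p : ℤ))))
    * (∏ ℓ ∈ Finset.Icc 1 (p - 1),
        mElemBar (β ℓ) (zx (lay p (-(ℓ : ℤ) - 1))) (zx (lay p (-(ℓ : ℤ)))))

/-- `layerCut H p z j` is the number of edges of `H` whose endpoints get different
signs on layer `j` (each unordered edge counted once). -/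
def layerCut {W : Type} [Fintype W] [DecidableEq W] (H : SimpleGraph W) [DecidableRel H.Adj]
    (p : ℕ) (z : W → Fin (2 * p + 1) → ℤˣ) (j : ℤ) : ℕ :=
  (Finset.univ.filter (fun pr : W × W =>
      H.Adj pr.1 pr.2 ∧ z pr.1 (lay p j) ≠ z pr.2 (lay p j))).card / 2

/-- The exponent `D(z) = Σ_{j=1}^p (C_j(z) - C_{-j}(z))` of a layered configuration. -/
def expnt {W : Type} [Fintype W] [DecidableEq W] (H : SimpleGraph W) [DecidableRel H.Adj]
    (p : ℕ) (z : W → Fin (2 * p + 1) → ℤˣ) : ℤ :=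
  ∑ j ∈ Finset.Icc 1 p, ((layerCut H p z (j : ℤ) : ℤ) - (layerCut H p z (-(j : ℤ)) : ℤ))

/-- The monomial contribution `z_a^{[0]} z_b^{[0]} ∏_x f(z_x)` of a configuration. -/
noncomputable def coeffTerm {W : Type} [Fintype W] [DecidableEq W] (p : ℕ) (β : ℕ → ℝ)
    (a b : W) (z : W → Fin (2 * p + 1) → ℤˣ) : ℂ :=
  ((z a (lay p 0) : ℤ) : ℂ) * ((z b (lay p 0) : ℤ) : ℂ) * ∏ x, kernel p β (z x)

/-- The mixer angles used in the reduction: `β_ℓ = ψ` for `1 ≤ ℓ ≤ p-2` and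
`β_{p-1} = β_p = π/4`. -/
noncomputable def betaAngles (p : ℕ) (ψ : ℝ) : ℕ → ℝ := fun ℓ =>
  if ℓ = p - 1 ∨ ℓ = p then Real.pi / 4 else ψ

end QAOA

namespace QAOA

/-- Negate the layer-0 sign of vertex `q`, leaving everything else unchanged. -/
def flip0 {W : Type} [DecidableEq W] (p : ℕ) (q : W)
    (z : W → Fin (2 * p + 1) → ℤˣ) : W → Fin (2 * p + 1) → ℤˣ :=
  fun x j => if x = q ∧ j = lay p 0 then -z x j else z x j

/-- The contribution `Contr(z) = z_u^{[0]} z_v^{[0]} · exp(i φ D(z)) · ∏_x f(z_x)`. -/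
noncomputable def Contr {W : Type} [Fintype W] [DecidableEq W] (H : SimpleGraph W)
    [DecidableRel H.Adj] (p : ℕ) (β : ℕ → ℝ) (φ : ℝ) (u v : W)
    (z : W → Fin (2 * p + 1) → ℤˣ) : ℂ :=
  ((z u (lay p 0) : ℤ) : ℂ) * ((z v (lay p 0) : ℤ) : ℂ) *
    Complex.exp (Complex.I * (φ : ℂ) * ((expnt H p z : ℤ) : ℂ)) *
    ∏ x, kernel p β (z x)

lemma lay_inj (p : ℕ) (j k : ℤ) (hj1 : -(p : ℤ) ≤ j) (hj2 : j ≤ p)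
    (hk1 : -(p : ℤ) ≤ k) (hk2 : k ≤ p) : lay p j = lay p k ↔ j = k := by
  unfold lay
  rw [Fin.mk.injEq, Nat.mod_eq_of_lt (by omega), Nat.mod_eq_of_lt (by omega)]
  omega

lemma lay_ne0 (p : ℕ) (j : ℤ) (hj1 : -(p : ℤ) ≤ j) (hj2 : j ≤ p) (hj3 : j ≠ 0) :
    lay p j ≠ lay p 0 := by
  rw [Ne, lay_inj p j 0 hj1 hj2 (by omega) (by omega)]
  exact hj3

lemma flip0_at {W : Type} [DecidableEq W] (p : ℕ) (q : W)
    (z : W → Fin (2 * p + 1) → ℤˣ) (j : Fin (2 * p + 1)) (hj : j ≠ lay p 0) (x : W) :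
    flip0 p q z x j = z x j := by
  simp only [flip0]
  rw [if_neg (by tauto)]

lemma flip0_ne {W : Type} [DecidableEq W] (p : ℕ) (q : W)
    (z : W → Fin (2 * p + 1) → ℤˣ) (x : W) (hx : x ≠ q) :
    flip0 p q z x = z x := by
  funext j
  simp only [flip0]
  rw [if_neg (by tauto)]

lemma expnt_flip {W : Type} [Fintype W] [DecidableEq W] (H : SimpleGraph W)
    [DecidableRel H.Adj] (p : ℕ) (q : W) (z : W → Fin (2 * p + 1) → ℤˣ) :
    expnt H p (flip0 p q z) = expnt H p z := by
  have key : ∀ jz : ℤ, lay p jz ≠ lay p 0 →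
      layerCut H p (flip0 p q z) jz = layerCut H p z jz := by
    intro jz h
    have h' := flip0_at p q z _ h
    simp only [layerCut, h']
  unfold expnt
  refine Finset.sum_congr rfl fun j hj => ?_
  rw [Finset.mem_Icc] at hj
  rw [key (j : ℤ) (lay_ne0 p j (by omega) (by omega) (by omega)),
    key (-(j : ℤ)) (lay_ne0 p _ (by omega) (by omega) (by omega))]

lemma flipfactor (a b c : ℤˣ) :
    mElem (Real.pi / 4) a (-b) * mElemBar (Real.pi / 4) (-b) c
      = (if a = c then 1 else -1) * (mElem (Real.pi / 4) a b * mElemBar (Real.pi / 4) b c) := by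
  have hs : (Real.sin (Real.pi / 4) : ℂ) = (Real.cos (Real.pi / 4) : ℂ) := by
    rw [Real.sin_pi_div_four, Real.cos_pi_div_four]
  rcases Int.units_eq_one_or a with ha | ha <;>
    rcases Int.units_eq_one_or b with hb | hb <;>
      rcases Int.units_eq_one_or c with hc | hc <;>
        subst ha <;> subst hb <;> subst hc <;>
          simp [mElem, mElemBar, hs] <;> ring_nf <;> simp [Complex.I_sq] <;> ring_nf

lemma kernel_flip_q {W : Type} [DecidableEq W] (p : ℕ) (hp : 1 ≤ p) (β : ℕ → ℝ)
    (hβp : β p = Real.pi / 4) (q : W) (z : W → Fin (2 * p + 1) → ℤˣ) :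
    kernel p β (flip0 p q z q)
      = (if z q (lay p (p : ℤ)) = z q (lay p (-(p : ℤ))) then 1 else -1)
        * kernel p β (z q) := by
  have h0 : ∀ j : ℤ, -(p : ℤ) ≤ j → j ≤ p → j ≠ 0 → lay p j ≠ lay p 0 := fun j h1 h2 h3 =>
    lay_ne0 p j h1 h2 h3
  have e0 : flip0 p q z q (lay p 0) = -(z q (lay p 0)) := by
    simp [flip0]
  have P1 : (∏ ℓ ∈ Finset.Icc 1 (p - 1),
        mElem (β ℓ) (flip0 p q z q (lay p ℓ)) (flip0 p q z q (lay p (ℓ + 1))))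
      = ∏ ℓ ∈ Finset.Icc 1 (p - 1), mElem (β ℓ) (z q (lay p ℓ)) (z q (lay p (ℓ + 1))) := by
    refine Finset.prod_congr rfl fun ℓ hℓ => ?_
    rw [Finset.mem_Icc] at hℓ
    rw [flip0_at p q z _ (h0 ℓ (by omega) (by omega) (by omega)),
      flip0_at p q z _ (h0 ((ℓ : ℤ) + 1) (by omega) (by omega) (by omega))]
  have P2 : (∏ ℓ ∈ Finset.Icc 1 (p - 1),
        mElemBar (β ℓ) (flip0 p q z q (lay p (-(ℓ : ℤ) - 1))) (flip0 p q z q (lay p (-(ℓ : ℤ)))))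
      = ∏ ℓ ∈ Finset.Icc 1 (p - 1),
        mElemBar (β ℓ) (z q (lay p (-(ℓ : ℤ) - 1))) (z q (lay p (-(ℓ : ℤ)))) := by
    refine Finset.prod_congr rfl fun ℓ hℓ => ?_
    rw [Finset.mem_Icc] at hℓ
    rw [flip0_at p q z _ (h0 (-(ℓ : ℤ) - 1) (by omega) (by omega) (by omega)),
      flip0_at p q z _ (h0 (-(ℓ : ℤ)) (by omega) (by omega) (by omega))]
  unfold kernel
  rw [P1, P2,
    flip0_at p q z _ (h0 (p : ℤ) (by omega) (by omega) (by omega)),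
    flip0_at p q z _ (h0 (-(p : ℤ)) (by omega) (by omega) (by omega)),
    e0, hβp]
  have hf := flipfactor (z q (lay p (p : ℤ))) (z q (lay p 0)) (z q (lay p (-(p : ℤ))))
  linear_combination ((1 : ℂ) / 2
      * (∏ ℓ ∈ Finset.Icc 1 (p - 1), mElem (β ℓ) (z q (lay p ℓ)) (z q (lay p (ℓ + 1))))
      * ∏ ℓ ∈ Finset.Icc 1 (p - 1),
          mElemBar (β ℓ) (z q (lay p (-(ℓ : ℤ) - 1))) (z q (lay p (-(ℓ : ℤ))))) * hf

lemma Contr_flip {W : Type} [Fintype W] [DecidableEq W] (H : SimpleGraph W)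
    [DecidableRel H.Adj] (p : ℕ) (hp : 1 ≤ p) (β : ℕ → ℝ) (hβp : β p = Real.pi / 4)
    (φ : ℝ) (u v q : W) (z : W → Fin (2 * p + 1) → ℤˣ) :
    Contr H p β φ u v (flip0 p q z)
      = (if z q (lay p (p : ℤ)) = z q (lay p (-(p : ℤ))) then 1 else -1)
        * (if u = q then -1 else 1) * (if v = q then -1 else 1)
        * Contr H p β φ u v z := by
  have hsgn : ∀ w : W, ((flip0 p q z w (lay p 0) : ℤ) : ℂ)
      = (if w = q then -1 else 1) * ((z w (lay p 0) : ℤ) : ℂ) := by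
    intro w
    by_cases h : w = q <;> simp [flip0, h]
  have hprod : ∏ x, kernel p β (flip0 p q z x)
      = (if z q (lay p (p : ℤ)) = z q (lay p (-(p : ℤ))) then 1 else -1)
        * ∏ x, kernel p β (z x) := by
    rw [← Finset.mul_prod_erase Finset.univ _ (Finset.mem_univ q),
      ← Finset.mul_prod_erase Finset.univ (fun x => kernel p β (z x)) (Finset.mem_univ q),
      kernel_flip_q p hp β hβp q z,
      Finset.prod_congr rfl (fun x hx => by
        rw [flip0_ne p q z x (Finset.ne_of_mem_erase hx)])]
    ring
  unfold Contr
  rw [expnt_flip, hsgn u, hsgn v, hprod]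
  ring

theorem endpoint_consistency
    {W : Type} [Fintype W] [DecidableEq W] (H : SimpleGraph W) [DecidableRel H.Adj]
    (p : ℕ) (hp : 2 ≤ p) (u v : W) (huv : H.Adj u v) (φ : ℝ) (β : ℕ → ℝ)
    (hβp : β p = Real.pi / 4) (q : W) (z : W → Fin (2 * p + 1) → ℤˣ) :
    (¬(q = u ∨ q = v) → z q (lay p p) ≠ z q (lay p (-(p : ℤ))) →
      Contr H p β φ u v (flip0 p q z) = -Contr H p β φ u v z) ∧
    ((q = u ∨ q = v) → z q (lay p p) = z q (lay p (-(p : ℤ))) →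
      Contr H p β φ u v (flip0 p q z) = -Contr H p β φ u v z) ∧
    ((¬(q = u ∨ q = v) ∧ z q (lay p p) = z q (lay p (-(p : ℤ)))) ∨
      ((q = u ∨ q = v) ∧ z q (lay p p) ≠ z q (lay p (-(p : ℤ)))) →
      Contr H p β φ u v (flip0 p q z) = Contr H p β φ u v z) := by
  have hp1 : 1 ≤ p := by omega
  have key := Contr_flip H p hp1 β hβp φ u v q z
  refine ⟨?_, ?_, ?_⟩
  · intro h1 h2
    push_neg at h1
    rw [key, if_neg h2, if_neg (fun h => h1.1 h.symm), if_neg (fun h => h1.2 h.symm)]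
    ring
  · rintro (rfl | rfl) h2
    · rw [key, if_pos h2, if_pos rfl, if_neg (fun h => huv.ne' h)]
      ring
    · rw [key, if_pos h2, if_neg (fun h => huv.ne h), if_pos rfl]
      ring
  · rintro (⟨h1, h2⟩ | ⟨rfl | rfl, h2⟩)
    · push_neg at h1
      rw [key, if_pos h2, if_neg (fun h => h1.1 h.symm), if_neg (fun h => h1.2 h.symm)]
      ring
    · rw [key, if_neg h2, if_pos rfl, if_neg (fun h => huv.ne' h)]
      ring
    · rw [key, if_neg h2, if_neg (fun h => huv.ne h), if_pos rfl]
      ring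

end QAOA
end

section
/- Apply the layered spin-configuration setup to the graph H = G'. Take mixer angles β_ℓ = ψ for 1 ≤ ℓ ≤ p−2 and β_{p−1} = β_p = π/4, where ψ is an arbitrary real number. Then for every integer k ≥ (p−1)·MAXCUT(G') + 200n0² + 2n0(11n0+1), the sum, over all layered spin configurations z on V(G') satisfying z_{x_0}^[p] ≠ z_{y_0}^[p] and D(z) = k, of z_{x_0}^[0] · z_{y_0}^[0] · Π_{x∈V(G')} f(z_x) equals 0. -/
/-!
STATEMENT 2: no high-degree contribution under asynchronous flips. For the
gadget graph G′ built from G, with mixer angles β_ℓ = ψ (1 ≤ ℓ ≤ p-2) and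
β_{p-1} = β_p = π/4, the sum over layered configurations z with
z_{x₀}^{[p]} ≠ z_{y₀}^{[p]} and D(z) = k of z_{x₀}^{[0]} z_{y₀}^{[0]} ∏_x f(z_x)
vanishes whenever k ≥ (p-1)·MAXCUT(G′) + 200 n₀² + 2 n₀(11 n₀ + 1).
-/
noncomputable section

namespace QAOA

/-- Vertex type of the graph `G'` built from a graph on vertex type `V` of size `n0`:
gadget vertices `L u i` (`i < n0+1`), `R u i` (`i < 10 n0`), frame vertices
`X i`, `Y i` (`i < 100 n0²`), and the controller `W`. -/
inductive GPV (V : Type) (n0 : ℕ) : Type where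
  | L : V → Fin (n0 + 1) → GPV V n0
  | R : V → Fin (10 * n0) → GPV V n0
  | X : Fin (100 * n0 * n0) → GPV V n0
  | Y : Fin (100 * n0 * n0) → GPV V n0
  | W : GPV V n0
  deriving DecidableEq, Fintype

/-- Base relation (one orientation per edge) describing the edges of `G'`. -/
def gpRel {V : Type} [DecidableEq V] (n0 : ℕ) (G : SimpleGraph V) [DecidableRel G.Adj] :
    GPV V n0 → GPV V n0 → Bool
  | .L u _, .R v _ => u == v
  | .L u i, .L v j => decide (G.Adj u v) && ((i : ℕ) == (j : ℕ))
  | .X _, .Y _ => true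
  | .X i, .L _ _ => (i : ℕ) == 0
  | .X i, .R _ _ => (i : ℕ) == 0
  | .Y i, .L _ _ => (i : ℕ) == 0
  | .Y i, .R _ _ => (i : ℕ) == 0
  | .W, .X i => (i : ℕ) == 0
  | .W, .Y i => (i : ℕ) == 0
  | .W, .L _ i => (i : ℕ) == 0
  | _, _ => false

/-- The graph `G'` obtained from `G` by the four-step construction. -/
def Gp {V : Type} [DecidableEq V] (n0 : ℕ) (G : SimpleGraph V) [DecidableRel G.Adj] :
    SimpleGraph (GPV V n0) :=
  SimpleGraph.fromRel (fun a b => gpRel n0 G a b = true)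

instance {V : Type} [DecidableEq V] (n0 : ℕ) (G : SimpleGraph V) [DecidableRel G.Adj] :
    DecidableRel (Gp n0 G).Adj := fun a b =>
  decidable_of_iff _ (SimpleGraph.fromRel_adj (fun a b => gpRel n0 G a b = true) a b).symm

/-- The special frame vertex `x₀`. -/
def xzero (V : Type) (n0 : ℕ) (h : 0 < n0) : GPV V n0 :=
  GPV.X ⟨0, Nat.mul_pos (Nat.mul_pos (by norm_num) h) h⟩

/-- The special frame vertex `y₀`. -/
def yzero (V : Type) (n0 : ℕ) (h : 0 < n0) : GPV V n0 :=
  GPV.Y ⟨0, Nat.mul_pos (Nat.mul_pos (by norm_num) h) h⟩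

/-- `cutSet H S` is the number of edges of `H` with exactly one endpoint in `S`. -/
def cutSet {W : Type} [Fintype W] [DecidableEq W] (H : SimpleGraph W) [DecidableRel H.Adj]
    (S : Finset W) : ℕ :=
  (Finset.univ.filter (fun pr : W × W => H.Adj pr.1 pr.2 ∧ pr.1 ∈ S ∧ pr.2 ∉ S)).card

/-- `maxCut H` is the maximum of `cutSet H S` over all vertex subsets `S`. -/
def maxCut {W : Type} [Fintype W] [DecidableEq W] (H : SimpleGraph W) [DecidableRel H.Adj] : ℕ :=
  (Finset.univ : Finset (Finset W)).sup (fun S => cutSet H S)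

end QAOA
/-!
Flipping the layer-0 spin of one vertex `x` leaves `D(z)` unchanged, and, because
`cos² β_p = sin² β_p`, multiplies `f(z_x)` by `+1` or `-1` according as `z_x^[p] = z_x^[-p]` or
not; it negates `z_{x₀}^[0] z_{y₀}^[0]` exactly when `x ∈ {x₀, y₀}`. So the term of `z` is
negated by the flip at any `x` for which `x ∈ {x₀, y₀}` holds iff `z_x^[p] = z_x^[-p]`, and such
terms cancel in pairs. If there is no such `x`, layer `-p` is layer `p` with exactly `x₀` and `y₀`
flipped. Since `x₀ ~ y₀` and both are adjacent to `w`, this gives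
`C_p - C_{-p} ≤ deg x₀ + deg y₀ - 3 ≤ 222 n₀² + 2 n₀ - 1`, while `C_j - C_{-j} ≤ MAXCUT(G')` for
the other `j`, so `D(z) < k`.
-/

theorem Finset.sum_eq_zero_of_exists_sign_reversing_flip {α ι M : Type*} [AddCommGroup M]
    {s : Finset α} {f : α → M} (flip : ι → α → α) (P : ι → α → Prop)
    (flip_flip : ∀ i a, flip i (flip i a) = a) (flip_ne : ∀ i a, flip i a ≠ a)
    (flip_mem : ∀ i a, a ∈ s → flip i a ∈ s) (P_flip : ∀ i j a, P j (flip i a) ↔ P j a)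
    (f_flip : ∀ i a, P i a → f (flip i a) = -f a) (exists_P : ∀ a ∈ s, ∃ i, P i a) :
    ∑ a ∈ s, f a = 0 := by
  rcases isEmpty_or_nonempty ι with hι | hι
  · exact Finset.sum_eq_zero fun a ha => isEmptyElim (exists_P a ha).choose
  -- The flipped index depends on `a` only through `P · a`, which no flip changes.
  let choice (a : α) : ι := Classical.epsilon fun i => P i a
  have choice_flip (i : ι) (a : α) : choice (flip i a) = choice a :=
    congrArg Classical.epsilon (funext fun j => propext (P_flip i j a))
  refine Finset.sum_involution (fun a _ => flip (choice a) a)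
    (fun a ha => ?_) (fun a _ _ => flip_ne _ a) (fun a ha => flip_mem _ a ha)
    (fun a _ => by rw [choice_flip, flip_flip])
  rw [f_flip _ a (Classical.epsilon_spec (exists_P a ha)), add_neg_cancel]

namespace QAOA

open Finset

section Flip

variable {W ι : Type*} [DecidableEq W] [DecidableEq ι]

def flipAt (x : W) (i : ι) (z : W → ι → ℤˣ) : W → ι → ℤˣ :=
  Function.update z x (Function.update (z x) i (-z x i))

variable {x : W} {i : ι} {z : W → ι → ℤˣ}

lemma flipAt_apply_self : flipAt x i z x = Function.update (z x) i (-z x i) :=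
  Function.update_self ..

lemma flipAt_apply_of_ne {y : W} (hy : y ≠ x) : flipAt x i z y = z y :=
  Function.update_of_ne hy ..

lemma flipAt_apply_of_ne_index (y : W) {j : ι} (hj : j ≠ i) : flipAt x i z y j = z y j := by
  rcases eq_or_ne y x with rfl | hy
  · rw [flipAt_apply_self, Function.update_of_ne hj]
  · rw [flipAt_apply_of_ne hy]

lemma flipAt_apply_self_self : flipAt x i z x i = -z x i := by
  rw [flipAt_apply_self, Function.update_self]

lemma flipAt_flipAt : flipAt x i (flipAt x i z) = z := by
  ext y j : 2
  rcases eq_or_ne y x with rfl | hy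
  · rcases eq_or_ne j i with rfl | hj
    · rw [flipAt_apply_self_self, flipAt_apply_self_self, neg_neg]
    · rw [flipAt_apply_of_ne_index _ hj, flipAt_apply_of_ne_index _ hj]
  · rw [flipAt_apply_of_ne hy, flipAt_apply_of_ne hy]

lemma flipAt_ne : flipAt x i z ≠ z := fun h => by
  have := congrFun (congrFun h x) i
  rw [flipAt_apply_self_self] at this
  exact (by decide : ∀ u : ℤˣ, -u ≠ u) _ this

end Flip

lemma lay_ne_lay_zero {p : ℕ} {j : ℤ} (h0 : j ≠ 0) (hlo : -(p : ℤ) ≤ j) (hhi : j ≤ p) :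
    lay p j ≠ lay p 0 := by
  intro h
  simp only [lay, Fin.mk.injEq] at h
  rw [Nat.mod_eq_of_lt (by omega), Nat.mod_eq_of_lt (by omega)] at h
  omega

lemma mElem_neg_mul_mElemBar_neg {β : ℝ} (hβ : Real.cos β ^ 2 = Real.sin β ^ 2) (a b d : ℤˣ) :
    mElem β a (-b) * mElemBar β (-b) d =
      (if a = d then 1 else -1) * (mElem β a b * mElemBar β b d) := by
  have hcs : (Real.cos β : ℂ) ^ 2 = (Real.sin β : ℂ) ^ 2 := by exact_mod_cast hβ
  unfold mElem mElemBar
  generalize (Real.cos β : ℂ) = c at *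
  generalize (Real.sin β : ℂ) = s at *
  rcases Int.units_eq_one_or a with rfl | rfl <;> rcases Int.units_eq_one_or b with rfl | rfl <;>
    rcases Int.units_eq_one_or d with rfl | rfl <;> simp <;>
    first
    | ring1
    | linear_combination hcs + s ^ 2 * Complex.I_sq
    | linear_combination -hcs - s ^ 2 * Complex.I_sq

lemma kernel_update_lay_zero_neg {p : ℕ} (hp : 0 < p) {β : ℕ → ℝ}
    (hβ : Real.cos (β p) ^ 2 = Real.sin (β p) ^ 2) (zx : Fin (2 * p + 1) → ℤˣ) :
    kernel p β (Function.update zx (lay p 0) (-zx (lay p 0))) =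
      (if zx (lay p p) = zx (lay p (-p)) then 1 else -1) * kernel p β zx := by
  set zx' := Function.update zx (lay p 0) (-zx (lay p 0))
  have hzx' {j : ℤ} (h0 : j ≠ 0) (hlo : -(p : ℤ) ≤ j) (hhi : j ≤ p) :
      zx' (lay p j) = zx (lay p j) :=
    Function.update_of_ne (lay_ne_lay_zero h0 hlo hhi) ..
  have hfwd : ∏ ℓ ∈ Icc 1 (p - 1), mElem (β ℓ) (zx' (lay p ℓ)) (zx' (lay p (ℓ + 1))) =
      ∏ ℓ ∈ Icc 1 (p - 1), mElem (β ℓ) (zx (lay p ℓ)) (zx (lay p (ℓ + 1))) :=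
    prod_congr rfl fun ℓ hℓ => by
      have := mem_Icc.1 hℓ
      rw [hzx' (by omega) (by omega) (by omega), hzx' (by omega) (by omega) (by omega)]
  have hbwd : ∏ ℓ ∈ Icc 1 (p - 1),
        mElemBar (β ℓ) (zx' (lay p (-(ℓ : ℤ) - 1))) (zx' (lay p (-(ℓ : ℤ)))) =
      ∏ ℓ ∈ Icc 1 (p - 1), mElemBar (β ℓ) (zx (lay p (-(ℓ : ℤ) - 1))) (zx (lay p (-(ℓ : ℤ)))) :=
    prod_congr rfl fun ℓ hℓ => by
      have := mem_Icc.1 hℓ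
      rw [hzx' (by omega) (by omega) (by omega), hzx' (by omega) (by omega) (by omega)]
  unfold kernel
  rw [hfwd, hbwd, hzx' (j := p) (by omega) (by omega) le_rfl,
    hzx' (j := -p) (by omega) le_rfl (by omega), show zx' (lay p 0) = -zx (lay p 0) from
      Function.update_self .., mul_assoc _ (mElem (β p) _ _), mElem_neg_mul_mElemBar_neg hβ]
  ring

section Configurations

variable {W : Type} [Fintype W] [DecidableEq W] {p : ℕ}

lemma prod_kernel_flipAt (hp : 0 < p) {β : ℕ → ℝ} (hβ : Real.cos (β p) ^ 2 = Real.sin (β p) ^ 2)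
    (x : W) (z : W → Fin (2 * p + 1) → ℤˣ) :
    ∏ y, kernel p β (flipAt x (lay p 0) z y) =
      (if z x (lay p p) = z x (lay p (-p)) then 1 else -1) * ∏ y, kernel p β (z y) := by
  rw [Fintype.prod_eq_mul_prod_compl x, Fintype.prod_eq_mul_prod_compl x (fun y => kernel p β _),
    flipAt_apply_self, kernel_update_lay_zero_neg hp hβ, mul_assoc,
    prod_congr rfl fun y hy => by rw [flipAt_apply_of_ne (by simpa using hy)]]

lemma coeffTerm_flipAt (hp : 0 < p) {β : ℕ → ℝ} (hβ : Real.cos (β p) ^ 2 = Real.sin (β p) ^ 2)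
    {a b x : W} (hab : a ≠ b) {z : W → Fin (2 * p + 1) → ℤˣ}
    (hx : (x = a ∨ x = b) ↔ z x (lay p p) = z x (lay p (-p))) :
    coeffTerm p β a b (flipAt x (lay p 0) z) = -coeffTerm p β a b z := by
  unfold coeffTerm
  rw [prod_kernel_flipAt hp hβ]
  by_cases hxab : x = a ∨ x = b
  · rw [if_pos (hx.1 hxab)]
    rcases hxab with rfl | rfl
    · rw [flipAt_apply_self_self, flipAt_apply_of_ne hab.symm]
      push_cast
      ring
    · rw [flipAt_apply_self_self, flipAt_apply_of_ne hab]
      push_cast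
      ring
  · rw [if_neg (mt hx.2 hxab), flipAt_apply_of_ne fun h => hxab (.inl h.symm),
      flipAt_apply_of_ne fun h => hxab (.inr h.symm)]
    ring

variable (H : SimpleGraph W) [DecidableRel H.Adj]

lemma expnt_flipAt_lay_zero (x : W) (z : W → Fin (2 * p + 1) → ℤˣ) :
    expnt H p (flipAt x (lay p 0) z) = expnt H p z := by
  have hlayer {j : ℤ} (h0 : j ≠ 0) (hlo : -(p : ℤ) ≤ j) (hhi : j ≤ p) :
      layerCut H p (flipAt x (lay p 0) z) j = layerCut H p z j := by
    simp only [layerCut, flipAt_apply_of_ne_index _ (lay_ne_lay_zero h0 hlo hhi)]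
  refine sum_congr rfl fun j hj => ?_
  have := mem_Icc.1 hj
  rw [hlayer (by omega) (by omega) (by omega), hlayer (by omega) (by omega) (by omega)]

end Configurations

section Cut

variable {W : Type} [Fintype W] [DecidableEq W] (H : SimpleGraph W) [DecidableRel H.Adj]

def cutPairs (s : W → ℤˣ) : Finset (W × W) :=
  univ.filter fun pr => H.Adj pr.1 pr.2 ∧ s pr.1 ≠ s pr.2

def boundaryPairs (S : Finset W) : Finset (W × W) :=
  univ.filter fun pr => H.Adj pr.1 pr.2 ∧ ¬(pr.1 ∈ S ↔ pr.2 ∈ S)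

lemma layerCut_eq_card_cutPairs_div_two (p : ℕ) (z : W → Fin (2 * p + 1) → ℤˣ) (j : ℤ) :
    layerCut H p z j = #(cutPairs H fun x => z x (lay p j)) / 2 :=
  rfl

lemma card_cutPairs_le_two_mul_maxCut (s : W → ℤˣ) : #(cutPairs H s) ≤ 2 * maxCut H := by
  set S := univ.filter fun x => s x = 1
  have hsub : cutPairs H s ⊆
      (univ.filter fun pr : W × W => H.Adj pr.1 pr.2 ∧ pr.1 ∈ S ∧ pr.2 ∉ S) ∪
      (univ.filter fun pr : W × W => H.Adj pr.1 pr.2 ∧ pr.1 ∈ Sᶜ ∧ pr.2 ∉ Sᶜ) := by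
    intro pr hpr
    simp only [cutPairs, S, mem_union, mem_filter, mem_univ, true_and, mem_compl,
      not_not] at hpr ⊢
    rcases Int.units_eq_one_or (s pr.1) with h1 | h1 <;>
      rcases Int.units_eq_one_or (s pr.2) with h2 | h2 <;> simp_all
  have hcut : #(cutPairs H s) ≤ cutSet H S + cutSet H Sᶜ :=
    (card_le_card hsub).trans (card_union_le _ _)
  have hS : cutSet H S ≤ maxCut H := le_sup (mem_univ S)
  have hSc : cutSet H Sᶜ ≤ maxCut H := le_sup (mem_univ Sᶜ)
  omega

lemma layerCut_le_maxCut (p : ℕ) (z : W → Fin (2 * p + 1) → ℤˣ) (j : ℤ) :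
    layerCut H p z j ≤ maxCut H := by
  have := card_cutPairs_le_two_mul_maxCut H fun x => z x (lay p j)
  rw [layerCut_eq_card_cutPairs_div_two]
  omega

lemma expnt_le_add_layerCut_sub_layerCut {p : ℕ} (hp : 0 < p) (z : W → Fin (2 * p + 1) → ℤˣ) :
    expnt H p z ≤ ((p : ℤ) - 1) * maxCut H + (layerCut H p z p - layerCut H p z (-p)) := by
  unfold expnt
  rw [← add_sum_erase _ _ (mem_Icc.2 ⟨hp, le_rfl⟩ : p ∈ Icc 1 p)]
  have hrest := sum_le_card_nsmul ((Icc 1 p).erase p)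
    (fun j : ℕ => (layerCut H p z j : ℤ) - layerCut H p z (-(j : ℤ))) (maxCut H)
    fun j _ => by
      have := layerCut_le_maxCut H p z j
      omega
  rw [card_erase_of_mem (mem_Icc.2 ⟨hp, le_rfl⟩), Nat.card_Icc, nsmul_eq_mul] at hrest
  push_cast [Nat.cast_sub hp] at hrest
  linarith

lemma card_cutPairs_add_two_mul_card_inter_boundaryPairs {s t : W → ℤˣ} {S : Finset W}
    (hst : ∀ x, t x ≠ s x ↔ x ∈ S) :
    #(cutPairs H s) + 2 * #(cutPairs H t ∩ boundaryPairs H S) =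
      #(cutPairs H t) + #(boundaryPairs H S) := by
  have hcard (T : Finset (W × W)) : #T = ∑ pr, if pr ∈ T then 1 else 0 := by
    simp
  rw [hcard (cutPairs H s), hcard (cutPairs H t ∩ _), hcard (cutPairs H t),
    hcard (boundaryPairs H S), mul_sum, ← sum_add_distrib, ← sum_add_distrib]
  refine sum_congr rfl fun ⟨x, y⟩ _ => ?_
  have ht := (by decide : ∀ a b c d : ℤˣ, c ≠ d ↔ (a ≠ b ↔ (c ≠ a ↔ d ≠ b))) (s x) (s y) (t x) (t y)
  rw [hst, hst] at ht
  simp only [cutPairs, boundaryPairs, mem_inter, mem_filter, mem_univ, true_and, ht]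
  split_ifs <;> grind

lemma card_boundaryPairs_pair_add_four_le {a b : W} (hab : H.Adj a b) :
    #(boundaryPairs H {a, b}) + 4 ≤ 2 * (H.degree a + H.degree b) := by
  set Na := (H.neighborFinset a).erase b
  set Nb := (H.neighborFinset b).erase a
  have hsub : boundaryPairs H {a, b} ⊆
      ({a} ×ˢ Na ∪ {b} ×ˢ Nb) ∪ (Na ×ˢ {a} ∪ Nb ×ˢ {b}) := by
    rintro ⟨x, y⟩ hxy
    simp only [boundaryPairs, mem_filter, mem_univ, true_and, mem_insert, mem_singleton] at hxy
    simp only [Na, Nb, mem_union, mem_product, mem_singleton, mem_erase,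
      SimpleGraph.mem_neighborFinset]
    grind [SimpleGraph.adj_comm, SimpleGraph.ne_of_adj]
  have hNa : #Na + 1 = H.degree a := card_erase_add_one ((H.mem_neighborFinset a b).2 hab)
  have hNb : #Nb + 1 = H.degree b := card_erase_add_one ((H.mem_neighborFinset b a).2 hab.symm)
  have := (card_le_card hsub).trans <| (card_union_le _ _).trans <|
    add_le_add (card_union_le _ _) (card_union_le _ _)
  simp only [card_product, card_singleton] at this
  omega

lemma card_cutPairs_add_six_le {s t : W → ℤˣ} {a b w : W} (hab : H.Adj a b)
    (haw : H.Adj a w) (hbw : H.Adj b w) (hs : s a ≠ s b)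
    (hst : ∀ x, t x ≠ s x ↔ x = a ∨ x = b) :
    #(cutPairs H s) + 6 ≤ #(cutPairs H t) + 2 * (H.degree a + H.degree b) := by
  have hst' : ∀ x, t x ≠ s x ↔ x ∈ ({a, b} : Finset W) := by simpa using hst
  have hw : w ∉ ({a, b} : Finset W) := by
    simpa [not_or] using ⟨(H.ne_of_adj haw).symm, (H.ne_of_adj hbw).symm⟩
  obtain ⟨c, hc, hcw, hsc⟩ : ∃ c ∈ ({a, b} : Finset W), H.Adj c w ∧ s c = s w := by
    by_cases h : s a = s w
    · exact ⟨a, by simp, haw, h⟩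
    · exact ⟨b, by simp, hbw, (by decide : ∀ u v x : ℤˣ, u ≠ v → u ≠ x → v = x) _ _ _ hs h⟩
  -- `t` flips `c` but not `w`, so the boundary pair `(c, w)` is cut by `t`.
  have hmem : (c, w) ∈ cutPairs H t ∩ boundaryPairs H {a, b} := by
    have htw : t w = s w := not_not.1 fun h => hw ((hst' w).1 h)
    simp only [cutPairs, boundaryPairs, mem_inter, mem_filter, mem_univ, true_and, hc, hw,
      iff_false, not_true_eq_false, not_false_eq_true, and_true, hcw, htw, ← hsc]
    exact (hst' c).2 hc
  have := card_pos.2 ⟨_, hmem⟩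
  have := card_cutPairs_add_two_mul_card_inter_boundaryPairs H hst'
  have := card_boundaryPairs_pair_add_four_le H hab
  omega

lemma layerCut_sub_layerCut_le {p : ℕ} (z : W → Fin (2 * p + 1) → ℤˣ) {i j : ℤ} {a b w : W}
    (hab : H.Adj a b) (haw : H.Adj a w) (hbw : H.Adj b w) (hz : z a (lay p i) ≠ z b (lay p i))
    (hflip : ∀ x, z x (lay p j) ≠ z x (lay p i) ↔ x = a ∨ x = b) :
    (layerCut H p z i : ℤ) - layerCut H p z j ≤ H.degree a + H.degree b - 3 := by
  have := card_cutPairs_add_six_le H hab haw hbw hz hflip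
  rw [layerCut_eq_card_cutPairs_div_two, layerCut_eq_card_cutPairs_div_two]
  omega

end Cut

section Gp

variable {V : Type} [DecidableEq V] (n0 : ℕ) (hn0 : 0 < n0)
  (G : SimpleGraph V) [DecidableRel G.Adj]

lemma xzero_adj_yzero : (Gp n0 G).Adj (xzero V n0 hn0) (yzero V n0 hn0) := by
  simp [Gp, gpRel, xzero, yzero]

lemma xzero_adj_W : (Gp n0 G).Adj (xzero V n0 hn0) .W := by
  simp [Gp, gpRel, xzero]

lemma yzero_adj_W : (Gp n0 G).Adj (yzero V n0 hn0) .W := by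
  simp [Gp, gpRel, yzero]

lemma xzero_not_adj_X (i : Fin (100 * n0 * n0)) : ¬(Gp n0 G).Adj (xzero V n0 hn0) (.X i) := by
  simp [Gp, gpRel, xzero]

lemma yzero_not_adj_Y (i : Fin (100 * n0 * n0)) : ¬(Gp n0 G).Adj (yzero V n0 hn0) (.Y i) := by
  simp [Gp, gpRel, yzero]

def foldFrame : GPV V n0 → (V × Fin (n0 + 1)) ⊕ (V × Fin (10 * n0)) ⊕ Fin (100 * n0 * n0) ⊕ Unit
  | .L u i => .inl (u, i)
  | .R u i => .inr (.inl (u, i))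
  | .X i => .inr (.inr (.inl i))
  | .Y i => .inr (.inr (.inl i))
  | .W => .inr (.inr (.inr ()))

variable {G}

lemma degree_Gp_le [Fintype V] (hV : Fintype.card V = n0) (v : GPV V n0)
    (hv : (∀ i, ¬(Gp n0 G).Adj v (.X i)) ∨ ∀ i, ¬(Gp n0 G).Adj v (.Y i)) :
    (Gp n0 G).degree v ≤ 111 * n0 * n0 + n0 + 1 := by
  have hinj : Set.InjOn (foldFrame n0) ((Gp n0 G).neighborFinset v : Set (GPV V n0)) := by
    intro x hx y hy hxy
    simp only [mem_coe, SimpleGraph.mem_neighborFinset] at hx hy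
    cases x <;> cases y <;> simp_all [foldFrame] <;> rcases hv with hv | hv <;> exact hv _ ‹_›
  calc (Gp n0 G).degree v ≤ Fintype.card
        ((V × Fin (n0 + 1)) ⊕ (V × Fin (10 * n0)) ⊕ Fin (100 * n0 * n0) ⊕ Unit) :=
        card_le_card_of_injOn _ (fun _ _ => mem_univ _) hinj
    _ = 111 * n0 * n0 + n0 + 1 := by
        simp only [Fintype.card_sum, Fintype.card_prod, Fintype.card_fin, Fintype.card_unit, hV]
        ring

end Gp

lemma expnt_Gp_lt {V : Type} [Fintype V] [DecidableEq V] {n0 : ℕ} (hn0 : 0 < n0)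
    (hV : Fintype.card V = n0) (G : SimpleGraph V) [DecidableRel G.Adj] {p : ℕ} (hp : 0 < p)
    (z : GPV V n0 → Fin (2 * p + 1) → ℤˣ)
    (hxy : z (xzero V n0 hn0) (lay p p) ≠ z (yzero V n0 hn0) (lay p p))
    (hflip : ∀ x, z x (lay p (-p)) ≠ z x (lay p p) ↔ x = xzero V n0 hn0 ∨ x = yzero V n0 hn0) :
    expnt (Gp n0 G) p z < ((p : ℤ) - 1) * maxCut (Gp n0 G) + 200 * (n0 : ℤ) ^ 2
      + 2 * (n0 : ℤ) * (11 * (n0 : ℤ) + 1) := by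
  have hlast := layerCut_sub_layerCut_le (Gp n0 G) z (xzero_adj_yzero n0 hn0 G)
    (xzero_adj_W n0 hn0 G) (yzero_adj_W n0 hn0 G) hxy hflip
  have hdx := degree_Gp_le n0 hV _ (.inl (xzero_not_adj_X n0 hn0 G))
  have hdy := degree_Gp_le n0 hV _ (.inr (yzero_not_adj_Y n0 hn0 G))
  have := expnt_le_add_layerCut_sub_layerCut (Gp n0 G) hp z
  zify at hdx hdy
  nlinarith

theorem no_high_degree_under_asynchronous_flips
    (n0 : ℕ) (hn0 : 0 < n0) {V : Type} [Fintype V] [DecidableEq V]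
    (hV : Fintype.card V = n0) (G : SimpleGraph V) [DecidableRel G.Adj]
    (p : ℕ) (hp : 2 ≤ p) (ψ : ℝ) (k : ℤ)
    (hk : ((p : ℤ) - 1) * (maxCut (Gp n0 G) : ℤ) + 200 * (n0 : ℤ) ^ 2
        + 2 * (n0 : ℤ) * (11 * (n0 : ℤ) + 1) ≤ k) :
    ∑ z ∈ Finset.univ.filter (fun z : GPV V n0 → Fin (2 * p + 1) → ℤˣ =>
        z (xzero V n0 hn0) (lay p p) ≠ z (yzero V n0 hn0) (lay p p) ∧
        expnt (Gp n0 G) p z = k),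
      coeffTerm p (betaAngles p ψ) (xzero V n0 hn0) (yzero V n0 hn0) z = 0 := by
  have hp0 : 0 < p := by omega
  have hβ : Real.cos (betaAngles p ψ p) ^ 2 = Real.sin (betaAngles p ψ p) ^ 2 := by
    simp [betaAngles, Real.cos_pi_div_four, Real.sin_pi_div_four]
  have hlay_p : lay p p ≠ lay p 0 := lay_ne_lay_zero (by omega) (by omega) le_rfl
  have hlay_neg_p : lay p (-p) ≠ lay p 0 := lay_ne_lay_zero (by omega) le_rfl (by omega)
  refine sum_eq_zero_of_exists_sign_reversing_flip (fun x => flipAt x (lay p 0))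
    (fun x z => (x = xzero V n0 hn0 ∨ x = yzero V n0 hn0) ↔ z x (lay p p) = z x (lay p (-p)))
    (fun _ _ => flipAt_flipAt) (fun _ _ => flipAt_ne) (fun x z hz => ?_) (fun x y z => ?_)
    (fun x z hx => coeffTerm_flipAt hp0 hβ (xzero_adj_yzero n0 hn0 G).ne hx) fun z hz => ?_
  · simp only [mem_filter, mem_univ, true_and] at hz ⊢
    rwa [flipAt_apply_of_ne_index _ hlay_p, flipAt_apply_of_ne_index _ hlay_p,
      expnt_flipAt_lay_zero]
  · rw [flipAt_apply_of_ne_index _ hlay_p, flipAt_apply_of_ne_index _ hlay_neg_p]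
  · simp only [mem_filter, mem_univ, true_and] at hz
    by_contra! hnone
    refine (expnt_Gp_lt hn0 hV G hp0 z hz.1 fun x => ?_).trans_le hk |>.ne hz.2
    have := hnone x
    rw [ne_comm]
    tauto

end QAOA
end
end

section
/- Let S be any subset of V(G') with cut_{G'}(S) = MAXCUT(G') (a maximum cut of G'). Then the two sides of the global bipartite frame lie in opposite parts of the cut: either X ⊆ S and Y ⊆ V(G') \ S, or Y ⊆ S and X ⊆ V(G') \ S. -/
/-!
STATEMENT 6: in any maximum cut of the gadget graph G′, the two sides X and Y of
the global bipartite frame lie in opposite parts of the cut.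
-/
noncomputable section

namespace QAOA
open Finset

variable {V : Type} [DecidableEq V] {n0 : ℕ} {G : SimpleGraph V} [DecidableRel G.Adj]

/-- frame predicate: is the vertex an `X` or `Y` frame vertex. -/
def isFrame {V : Type} {n0 : ℕ} : GPV V n0 → Bool
  | .X _ => true
  | .Y _ => true
  | _ => false

/-- is the vertex an `X` frame vertex. -/
def isX {V : Type} {n0 : ℕ} : GPV V n0 → Bool
  | .X _ => true
  | _ => false

/-- encoding of the non-frame vertices into a small type. -/
def encNF {V : Type} {n0 : ℕ} : GPV V n0 → (V × Fin (n0 + 1)) ⊕ (V × Fin (10 * n0)) ⊕ Unit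
  | .L u i => .inl (u, i)
  | .R u i => .inr (.inl (u, i))
  | _ => .inr (.inr ())

lemma encNF_inj {a b : GPV V n0} (ha : isFrame a = false) (hb : isFrame b = false)
    (h : encNF a = encNF b) : a = b := by
  rcases a with _|_|_|_|_ <;> rcases b with _|_|_|_|_ <;> simp_all [isFrame, encNF]

/-- membership predicate for the comparison cut. -/
def inSp (S : Finset (GPV V n0)) : GPV V n0 → Bool
  | .X _ => true
  | .Y _ => false
  | v => decide (v ∈ S)

lemma inSp_nonframe (S : Finset (GPV V n0)) {v : GPV V n0} (hv : isFrame v = false) :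
    inSp S v = true ↔ v ∈ S := by
  rcases v with _|_|_|_|_ <;> simp_all [isFrame, inSp]

lemma gp_adj_iff (a b : GPV V n0) :
    (Gp n0 G).Adj a b ↔ a ≠ b ∧ (gpRel n0 G a b = true ∨ gpRel n0 G b a = true) :=
  SimpleGraph.fromRel_adj _ a b

lemma adj_XY (i j : Fin (100 * n0 * n0)) :
    (Gp n0 G).Adj (GPV.X i) (GPV.Y j) := by
  rw [gp_adj_iff]
  exact ⟨by simp, Or.inl rfl⟩

lemma adj_frame_cases {a b : GPV V n0} (hab : (Gp n0 G).Adj a b)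
    (ha : isFrame a = true) (hb : isFrame b = true) :
    (∃ i j, a = GPV.X i ∧ b = GPV.Y j) ∨ (∃ i j, a = GPV.Y i ∧ b = GPV.X j) := by
  rw [gp_adj_iff] at hab
  rcases a with _|_|i|i|_ <;> rcases b with _|_|j|j|_ <;>
    simp_all [isFrame, gpRel]

lemma adj_nonframe_index {a v : GPV V n0} (h : (Gp n0 G).Adj a v)
    (ha : isFrame a = true) (hv : isFrame v = false) :
    ∃ i : Fin (100 * n0 * n0), (i : ℕ) = 0 ∧
      ((isX a = true ∧ a = GPV.X i) ∨ (isX a = false ∧ a = GPV.Y i)) := by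
  rw [gp_adj_iff] at h
  rcases a with _|_|i|i|_
  · simp [isFrame] at ha
  · simp [isFrame] at ha
  · exact ⟨i, by rcases v with _|_|j|j|_ <;> simp_all [gpRel, isFrame, isX], Or.inl ⟨rfl, rfl⟩⟩
  · exact ⟨i, by rcases v with _|_|j|j|_ <;> simp_all [gpRel, isFrame, isX], Or.inr ⟨rfl, rfl⟩⟩
  · simp [isFrame] at ha

lemma mixed_cases {x y : Bool} (h1 : ¬(x = true ∧ y = true)) (h2 : ¬(x = false ∧ y = false)) :
    (x = true ∧ y = false) ∨ (x = false ∧ y = true) := by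
  rcases x <;> rcases y <;> simp_all

lemma key_arith {N k kc m mc T : ℕ} (hk : k + kc = N) (hm : m + mc = N)
    (hT : T < N) (h : N * N ≤ k * mc + m * kc + T) :
    (kc = 0 ∧ m = 0) ∨ (k = 0 ∧ mc = 0) := by
  have hexp : k * m + kc * mc ≤ T := by nlinarith
  rcases Nat.eq_zero_or_pos k with hk0 | hk1
  · right
    refine ⟨hk0, ?_⟩
    subst hk0
    simp only [Nat.zero_add] at hk
    subst hk
    rcases Nat.eq_zero_or_pos mc with h0 | h1
    · exact h0
    · exfalso
      have : kc ≤ kc * mc := Nat.le_mul_of_pos_right _ h1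
      omega
  · rcases Nat.eq_zero_or_pos kc with hkc0 | hkc1
    · left
      refine ⟨hkc0, ?_⟩
      subst hkc0
      simp only [Nat.add_zero] at hk
      subst hk
      rcases Nat.eq_zero_or_pos m with h0 | h1
      · exact h0
      · exfalso
        have : k ≤ k * m := Nat.le_mul_of_pos_right _ h1
        omega
    · exfalso
      have h1 : m ≤ k * m := Nat.le_mul_of_pos_left _ hk1
      have h2 : mc ≤ kc * mc := Nat.le_mul_of_pos_left _ hkc1
      omega

end QAOA

namespace QAOA
open Finset

theorem frame_separated_in_maxcut
    (n0 : ℕ) (hn0 : 0 < n0) {V : Type} [Fintype V] [DecidableEq V]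
    (hV : Fintype.card V = n0) (G : SimpleGraph V) [DecidableRel G.Adj]
    (S : Finset (GPV V n0)) (hS : cutSet (Gp n0 G) S = maxCut (Gp n0 G)) :
    ((∀ i, GPV.X i ∈ S) ∧ (∀ i, GPV.Y (V := V) (n0 := n0) i ∉ S)) ∨
    ((∀ i, GPV.Y i ∈ S) ∧ (∀ i, GPV.X (V := V) (n0 := n0) i ∉ S)) := by
  have hN : (0:ℕ) < 100 * n0 * n0 := by positivity
  -- the comparison cut
  set T : Finset (GPV V n0) := univ.filter (fun v => inSp S v = true) with hTdef
  have memT : ∀ v, v ∈ T ↔ inSp S v = true := by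
    intro v; simp [hTdef]
  -- cut-pair sets
  set CPS : Finset (GPV V n0 × GPV V n0) :=
    univ.filter (fun pr => (Gp n0 G).Adj pr.1 pr.2 ∧ pr.1 ∈ S ∧ pr.2 ∉ S) with hCPS
  set CPT : Finset (GPV V n0 × GPV V n0) :=
    univ.filter (fun pr => (Gp n0 G).Adj pr.1 pr.2 ∧ pr.1 ∈ T ∧ pr.2 ∉ T) with hCPT
  have hcutS : cutSet (Gp n0 G) S = CPS.card := rfl
  have hcutT : cutSet (Gp n0 G) T = CPT.card := rfl
  -- classes of pairs
  set AT := CPT.filter (fun pr => isFrame pr.1 = true ∧ isFrame pr.2 = true) with hAT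
  set BT := CPT.filter (fun pr => isFrame pr.1 = false ∧ isFrame pr.2 = false) with hBT
  set AS := CPS.filter (fun pr => isFrame pr.1 = true ∧ isFrame pr.2 = true) with hAS
  set BS := CPS.filter (fun pr => isFrame pr.1 = false ∧ isFrame pr.2 = false) with hBS
  set MS := CPS.filter (fun pr => ¬(isFrame pr.1 = true ∧ isFrame pr.2 = true) ∧
      ¬(isFrame pr.1 = false ∧ isFrame pr.2 = false)) with hMS
  -- lower bound for the comparison cut
  have hdisj : Disjoint AT BT := by
    rw [Finset.disjoint_left]
    intro pr h1 h2
    rw [hAT, mem_filter] at h1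
    rw [hBT, mem_filter] at h2
    simp_all
  have hlow : AT.card + BT.card ≤ CPT.card := by
    rw [← Finset.card_union_of_disjoint hdisj]
    exact Finset.card_le_card (Finset.union_subset (Finset.filter_subset _ _)
      (Finset.filter_subset _ _))
  -- AT.card = N * N
  have hATcard : AT.card = (100 * n0 * n0) * (100 * n0 * n0) := by
    have himg : AT = (univ : Finset (Fin (100 * n0 * n0) × Fin (100 * n0 * n0))).image
        (fun p => (GPV.X p.1, GPV.Y p.2)) := by
      ext pr
      simp only [hAT, hCPT, mem_filter, mem_univ, true_and, Finset.mem_image, Prod.exists]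
      constructor
      · rintro ⟨⟨hadj, h1, h2⟩, hf1, hf2⟩
        rcases adj_frame_cases hadj hf1 hf2 with ⟨i, j, e1, e2⟩ | ⟨i, j, e1, e2⟩
        · exact ⟨i, j, by rw [Prod.ext_iff]; exact ⟨e1.symm, e2.symm⟩⟩
        · exfalso
          rw [memT] at h1
          rw [e1] at h1
          simp [inSp] at h1
      · rintro ⟨i, j, rfl⟩
        refine ⟨⟨adj_XY i j, ?_, ?_⟩, rfl, rfl⟩
        · rw [memT]; rfl
        · rw [memT]; simp [inSp]
    have hinj : Function.Injective
        (fun p : Fin (100 * n0 * n0) × Fin (100 * n0 * n0) =>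
          ((GPV.X p.1, GPV.Y p.2) : GPV V n0 × GPV V n0)) := by
      intro a b h
      simp only [Prod.ext_iff, GPV.X.injEq, GPV.Y.injEq] at h
      exact Prod.ext h.1 h.2
    rw [himg, Finset.card_image_of_injective _ hinj, Finset.card_univ]
    simp
  -- BT = BS
  have hBeq : BT = BS := by
    ext pr
    rw [hBT, hBS, hCPT, hCPS]
    simp only [mem_filter, mem_univ, true_and]
    constructor
    · rintro ⟨⟨hadj, h1, h2⟩, hf1, hf2⟩
      refine ⟨⟨hadj, ?_, ?_⟩, hf1, hf2⟩
      · exact (inSp_nonframe S hf1).mp ((memT _).mp h1)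
      · intro hc
        exact h2 ((memT _).mpr ((inSp_nonframe S hf2).mpr hc))
    · rintro ⟨⟨hadj, h1, h2⟩, hf1, hf2⟩
      refine ⟨⟨hadj, ?_, ?_⟩, hf1, hf2⟩
      · exact (memT _).mpr ((inSp_nonframe S hf1).mpr h1)
      · intro hc
        exact h2 ((inSp_nonframe S hf2).mp ((memT _).mp hc))
  -- upper bound decomposition for the max cut
  have hup : CPS.card ≤ AS.card + MS.card + BS.card := by
    have hsub : CPS ⊆ AS ∪ MS ∪ BS := by
      intro pr hpr
      by_cases h1 : isFrame pr.1 = true ∧ isFrame pr.2 = true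
      · exact Finset.mem_union_left _ (Finset.mem_union_left _ (Finset.mem_filter.mpr ⟨hpr, h1⟩))
      · by_cases h2 : isFrame pr.1 = false ∧ isFrame pr.2 = false
        · exact Finset.mem_union_right _ (Finset.mem_filter.mpr ⟨hpr, h2⟩)
        · exact Finset.mem_union_left _ (Finset.mem_union_right _
            (Finset.mem_filter.mpr ⟨hpr, h1, h2⟩))
    calc CPS.card ≤ (AS ∪ MS ∪ BS).card := Finset.card_le_card hsub
      _ ≤ (AS ∪ MS).card + BS.card := Finset.card_union_le _ _
      _ ≤ AS.card + MS.card + BS.card := by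
          exact Nat.add_le_add_right (Finset.card_union_le _ _) _
  -- the four index sets
  set sX := univ.filter (fun i : Fin (100 * n0 * n0) => GPV.X (V := V) i ∈ S) with hsX
  set sXc := univ.filter (fun i : Fin (100 * n0 * n0) => ¬ GPV.X (V := V) i ∈ S) with hsXc
  set sY := univ.filter (fun i : Fin (100 * n0 * n0) => GPV.Y (V := V) (n0 := n0) i ∈ S) with hsY
  set sYc := univ.filter (fun i : Fin (100 * n0 * n0) => ¬ GPV.Y (V := V) (n0 := n0) i ∈ S) with hsYc
  have hk : sX.card + sXc.card = 100 * n0 * n0 := by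
    rw [hsX, hsXc, Finset.card_filter_add_card_filter_not]
    simp
  have hm : sY.card + sYc.card = 100 * n0 * n0 := by
    rw [hsY, hsYc, Finset.card_filter_add_card_filter_not]
    simp
  -- bound on AS
  have hAScard : AS.card ≤ sX.card * sYc.card + sY.card * sXc.card := by
    have hsub : AS ⊆ ((sX ×ˢ sYc).image (fun p => ((GPV.X p.1 : GPV V n0), GPV.Y p.2))) ∪
        ((sY ×ˢ sXc).image (fun p => ((GPV.Y p.1 : GPV V n0), GPV.X p.2))) := by
      intro pr hpr
      rw [hAS, mem_filter] at hpr
      obtain ⟨hcp, hf1, hf2⟩ := hpr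
      rw [hCPS, mem_filter] at hcp
      obtain ⟨-, hadj, h1, h2⟩ := hcp
      rcases adj_frame_cases hadj hf1 hf2 with ⟨i, j, e1, e2⟩ | ⟨i, j, e1, e2⟩
      · refine Finset.mem_union_left _ (Finset.mem_image.mpr ⟨(i, j), ?_, ?_⟩)
        · rw [Finset.mem_product]
          constructor
          · rw [hsX, mem_filter]; exact ⟨mem_univ _, e1 ▸ h1⟩
          · rw [hsYc, mem_filter]; exact ⟨mem_univ _, e2 ▸ h2⟩
        · rw [Prod.ext_iff]; exact ⟨e1.symm, e2.symm⟩
      · refine Finset.mem_union_right _ (Finset.mem_image.mpr ⟨(i, j), ?_, ?_⟩)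
        · rw [Finset.mem_product]
          constructor
          · rw [hsY, mem_filter]; exact ⟨mem_univ _, e1 ▸ h1⟩
          · rw [hsXc, mem_filter]; exact ⟨mem_univ _, e2 ▸ h2⟩
        · rw [Prod.ext_iff]; exact ⟨e1.symm, e2.symm⟩
    calc AS.card ≤ _ := Finset.card_le_card hsub
      _ ≤ _ + _ := Finset.card_union_le _ _
      _ ≤ sX.card * sYc.card + sY.card * sXc.card := by
          refine Nat.add_le_add ?_ ?_
          · exact (Finset.card_image_le).trans (by rw [Finset.card_product])
          · exact (Finset.card_image_le).trans (by rw [Finset.card_product])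
  -- bound on MS
  have hMScard : MS.card ≤ 2 * (2 * (n0 * (n0 + 1) + (n0 * (10 * n0) + 1))) := by
    classical
    have hinj : Set.InjOn (fun pr : GPV V n0 × GPV V n0 =>
        if isFrame pr.1 = true then (true, isX pr.1, encNF pr.2)
        else (false, isX pr.2, encNF pr.1)) MS := by
      intro pr hpr pr' hpr' heq
      have hpr : pr ∈ MS := hpr
      have hpr' : pr' ∈ MS := hpr'
      rw [hMS, mem_filter] at hpr hpr'
      obtain ⟨hcp, hn1, hn2⟩ := hpr
      obtain ⟨hcp', hn1', hn2'⟩ := hpr'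
      rw [hCPS, mem_filter] at hcp hcp'
      obtain ⟨-, hadj, -, -⟩ := hcp
      obtain ⟨-, hadj', -, -⟩ := hcp'
      rcases mixed_cases hn1 hn2 with ⟨hf1, hf2⟩ | ⟨hf1, hf2⟩ <;>
        rcases mixed_cases hn1' hn2' with ⟨hf1', hf2'⟩ | ⟨hf1', hf2'⟩
      · -- both have frame vertex first
        simp only [hf1, hf1', if_pos, Prod.mk.injEq] at heq
        obtain ⟨-, hxeq, henc⟩ := heq
        have h2 : pr.2 = pr'.2 := encNF_inj hf2 hf2' henc
        obtain ⟨i, hi0, hc⟩ := adj_nonframe_index hadj hf1 hf2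
        obtain ⟨i', hi0', hc'⟩ := adj_nonframe_index hadj' hf1' hf2'
        have hii : i = i' := Fin.ext (by omega)
        have h1 : pr.1 = pr'.1 := by
          rcases hc with ⟨hx, he⟩ | ⟨hx, he⟩ <;> rcases hc' with ⟨hx', he'⟩ | ⟨hx', he'⟩
          · rw [he, he', hii]
          · rw [hx, hx'] at hxeq; exact absurd hxeq (by simp)
          · rw [hx, hx'] at hxeq; exact absurd hxeq (by simp)
          · rw [he, he', hii]
        exact Prod.ext h1 h2
      · simp only [hf1, hf1', Prod.mk.injEq] at heq
        simp at heq
      · simp only [hf1, hf1', Prod.mk.injEq] at heq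
        simp at heq
      · -- both have frame vertex second
        simp only [hf1, hf1', Prod.mk.injEq] at heq
        simp only [Bool.false_eq_true, if_false, Prod.mk.injEq, true_and] at heq
        obtain ⟨hxeq, henc⟩ := heq
        have h1 : pr.1 = pr'.1 := encNF_inj hf1 hf1' henc
        obtain ⟨i, hi0, hc⟩ := adj_nonframe_index hadj.symm hf2 hf1
        obtain ⟨i', hi0', hc'⟩ := adj_nonframe_index hadj'.symm hf2' hf1'
        have hii : i = i' := Fin.ext (by omega)
        have h2 : pr.2 = pr'.2 := by
          rcases hc with ⟨hx, he⟩ | ⟨hx, he⟩ <;> rcases hc' with ⟨hx', he'⟩ | ⟨hx', he'⟩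
          · rw [he, he', hii]
          · rw [hx, hx'] at hxeq; exact absurd hxeq (by simp)
          · rw [hx, hx'] at hxeq; exact absurd hxeq (by simp)
          · rw [he, he', hii]
        exact Prod.ext h1 h2
    have := Finset.card_le_card_of_injOn _ (fun a _ => Finset.mem_univ
      ((if isFrame a.1 = true then (true, isX a.1, encNF a.2) else (false, isX a.2, encNF a.1)) :
        Bool × Bool × ((V × Fin (n0 + 1)) ⊕ (V × Fin (10 * n0)) ⊕ Unit))) hinj
    refine this.trans ?_
    rw [Finset.card_univ]
    simp [Fintype.card_prod, Fintype.card_sum, hV]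
  -- the comparison cut is at most the max cut
  have hTle : CPT.card ≤ CPS.card := by
    rw [← hcutT, ← hcutS, hS]
    exact Finset.le_sup (Finset.mem_univ T)
  -- main inequality
  have hmain : (100 * n0 * n0) * (100 * n0 * n0) ≤
      sX.card * sYc.card + sY.card * sXc.card + 2 * (2 * (n0 * (n0 + 1) + (n0 * (10 * n0) + 1))) := by
    have c1 : (100 * n0 * n0) * (100 * n0 * n0) + BS.card ≤ CPT.card := by
      rw [← hATcard, ← hBeq]; exact hlow
    have c2 : CPS.card ≤ sX.card * sYc.card + sY.card * sXc.card +
        2 * (2 * (n0 * (n0 + 1) + (n0 * (10 * n0) + 1))) + BS.card := by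
      calc CPS.card ≤ AS.card + MS.card + BS.card := hup
        _ ≤ _ := by
            refine Nat.add_le_add_right (Nat.add_le_add hAScard hMScard) _
        _ = _ := by ring
    have := le_trans c1 (le_trans hTle c2)
    omega
  have hTbound : 2 * (2 * (n0 * (n0 + 1) + (n0 * (10 * n0) + 1))) < 100 * n0 * n0 := by
    nlinarith
  rcases key_arith hk hm hTbound hmain with ⟨hkc0, hm0⟩ | ⟨hk0, hmc0⟩
  · left
    constructor
    · intro i
      by_contra hc
      have : i ∈ sXc := by rw [hsXc, mem_filter]; exact ⟨mem_univ _, hc⟩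
      rw [Finset.card_eq_zero.mp hkc0] at this
      exact absurd this (Finset.notMem_empty _)
    · intro i hc
      have : i ∈ sY := by rw [hsY, mem_filter]; exact ⟨mem_univ _, hc⟩
      rw [Finset.card_eq_zero.mp hm0] at this
      exact absurd this (Finset.notMem_empty _)
  · right
    constructor
    · intro i
      by_contra hc
      have : i ∈ sYc := by rw [hsYc, mem_filter]; exact ⟨mem_univ _, hc⟩
      rw [Finset.card_eq_zero.mp hmc0] at this
      exact absurd this (Finset.notMem_empty _)
    · intro i hc
      have : i ∈ sX := by rw [hsX, mem_filter]; exact ⟨mem_univ _, hc⟩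
      rw [Finset.card_eq_zero.mp hk0] at this
      exact absurd this (Finset.notMem_empty _)

end QAOA
end
end

section
/- Let S' be any subset of V(G') with cut_{G'}(S') = MAXCUT(G') (a maximum cut of G'), and define S = { u ∈ V(G) : L_u ⊆ S' }. Then cut_G(S) = MAXCUT(G); that is, the projection (S, V(G) \ S) is a maximum cut of the original graph G. -/
noncomputable section

/-!
A cut of `G'` splits into five parts: the synchronous edges (layer `i` is a copy of `G`, cut by
`{u | u_{1,i} ∈ S}`), the gadgets `L_u × R_u`, the frame `X × Y`, the hub edges at `x₀` and `y₀`,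
and the controller edges at `w`.

A maximum cut `S'` separates `x₀` from `y₀`: otherwise putting `X` on one side and `Y` on the
other gains at least `100 n0²` on the frame and loses at most `11 n0² + 2 n0 + 2` elsewhere.
Then `S'` separates `L_u` from `R_u` for every `u`: after complementing `S'` if necessary, most of
`L_u` lies in `S'`, and moving all of `L_u` into `S'` and all of `R_u` out of it gains at least
`10 n0` on the gadget per moved vertex of `L_u` (and `n0 + 1` per moved vertex of `R_u` once
`L_u ⊆ S'`), at the price of at most `n0 - 1` synchronous edges per moved vertex of `L_u` and one
controller edge. For such an `S'` every layer equals the projection `S`, so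
`cut(S') ≤ (n0 + 1) cut_G(S) + C + n0 + 1`, whereas every `T ⊆ V(G)` lifts to a cut of `G'` of
value at least `(n0 + 1) cut_G(T) + C + 1`; hence `cut_G(T) ≤ cut_G(S)`.
-/

namespace QAOA

open Finset

section Cut

variable {α : Type} [Fintype α] [DecidableEq α] (H : SimpleGraph α) [DecidableRel H.Adj]

def IsMaxCut (S : Finset α) : Prop := ∀ T, cutSet H T ≤ cutSet H S

theorem cutSet_eq_sum (S : Finset α) :
    cutSet H S = ∑ a, ∑ b, if H.Adj a b ∧ a ∈ S ∧ b ∉ S then 1 else 0 := by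
  rw [cutSet, card_filter, ← univ_product_univ, sum_product]

theorem cutSet_le_maxCut (S : Finset α) : cutSet H S ≤ maxCut H :=
  le_sup (f := cutSet H) (mem_univ S)

theorem isMaxCut_iff_cutSet_eq_maxCut (S : Finset α) :
    IsMaxCut H S ↔ cutSet H S = maxCut H :=
  ⟨fun h => le_antisymm (cutSet_le_maxCut H S) (Finset.sup_le fun T _ => h T),
    fun h T => h ▸ cutSet_le_maxCut H T⟩

theorem cutSet_compl (S : Finset α) : cutSet H Sᶜ = cutSet H S := by
  refine card_nbij' Prod.swap Prod.swap ?_ ?_ (fun _ _ => rfl) (fun _ _ => rfl) <;>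
    · rintro ⟨a, b⟩
      simp only [coe_filter, mem_univ, true_and, Set.mem_ofPred_eq, mem_compl, not_not,
        Prod.fst_swap, Prod.snd_swap, H.adj_comm a b]
      tauto

theorem IsMaxCut.compl {S : Finset α} (h : IsMaxCut H S) : IsMaxCut H Sᶜ := by
  intro T
  rw [cutSet_compl]
  exact h T

theorem cutSet_le_cutSet_insert_add_degree (S : Finset α) (u : α) :
    cutSet H S ≤ cutSet H (insert u S) + H.degree u := by
  calc cutSet H S
      ≤ #(univ.filter (fun p : α × α => H.Adj p.1 p.2 ∧ p.1 ∈ insert u S ∧ p.2 ∉ insert u S) ∪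
          H.neighborFinset u ×ˢ {u}) := by
        refine card_le_card fun ⟨a, b⟩ => ?_
        simp only [mem_filter, mem_univ, true_and, mem_union, mem_insert, mem_product,
          SimpleGraph.mem_neighborFinset, mem_singleton, H.adj_comm u a]
        rintro ⟨hab, ha, hb⟩
        by_cases hbu : b = u
        · exact .inr ⟨hbu ▸ hab, hbu⟩
        · exact .inl ⟨hab, .inr ha, by tauto⟩
    _ ≤ cutSet H (insert u S) + H.degree u := by
        refine (card_union_le _ _).trans_eq ?_
        rw [card_product, card_singleton, mul_one, SimpleGraph.card_neighborFinset_eq_degree,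
          cutSet]

end Cut

section Count

variable {α ι κ : Type} [Fintype ι] [Fintype κ] [DecidableEq α] (S : Finset α) (f : ι → α)

def inCount : ℕ := #{i | f i ∈ S}

def outCount : ℕ := #{i | f i ∉ S}

theorem inCount_add_outCount : inCount S f + outCount S f = Fintype.card ι :=
  card_filter_add_card_filter_not _

theorem inCount_eq_zero : inCount S f = 0 ↔ ∀ i, f i ∉ S := by
  simp [inCount, filter_eq_empty_iff]

theorem outCount_eq_zero : outCount S f = 0 ↔ ∀ i, f i ∈ S := by
  simp [outCount, filter_eq_empty_iff]

theorem inCount_pos {i : ι} (h : f i ∈ S) : 0 < inCount S f :=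
  card_pos.2 ⟨i, by simpa using h⟩

theorem outCount_pos {i : ι} (h : f i ∉ S) : 0 < outCount S f :=
  card_pos.2 ⟨i, by simpa using h⟩

theorem inCount_compl [Fintype α] : inCount Sᶜ f = outCount S f := by
  simp [inCount, outCount]

theorem outCount_compl [Fintype α] : outCount Sᶜ f = inCount S f := by
  simp [inCount, outCount]

theorem inCount_congr {T : Finset α} (h : ∀ i, f i ∈ S ↔ f i ∈ T) :
    inCount S f = inCount T f := by
  simp only [inCount, h]

theorem outCount_congr {T : Finset α} (h : ∀ i, f i ∈ S ↔ f i ∈ T) :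
    outCount S f = outCount T f := by
  simp only [outCount, h]

theorem inCount_mul_outCount (g : κ → α) :
    inCount S f * outCount S g = ∑ i, ∑ j, if f i ∈ S ∧ g j ∉ S then 1 else 0 := by
  simp only [inCount, outCount, card_filter, sum_mul_sum, ite_zero_mul_ite_zero, mul_one]

def cross (a b : α) : ℕ := if a ∈ S ↔ b ∉ S then 1 else 0

theorem cross_eq_ite_add_ite (a b : α) :
    cross S a b = (if a ∈ S ∧ b ∉ S then 1 else 0) + if b ∈ S ∧ a ∉ S then 1 else 0 := by
  unfold cross
  by_cases a ∈ S <;> by_cases b ∈ S <;> simp_all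

theorem cross_le_one (a b : α) : cross S a b ≤ 1 := by
  unfold cross
  split <;> omega

theorem sum_cross_le (a : α) : ∑ i, cross S a (f i) ≤ Fintype.card ι :=
  (sum_le_sum fun i _ => cross_le_one S a (f i)).trans_eq (by simp)

theorem cross_add_cross {a b : α} (h : a ∈ S ↔ b ∉ S) (c : α) :
    cross S a c + cross S b c = 1 := by
  unfold cross
  by_cases a ∈ S <;> by_cases c ∈ S <;> simp_all

end Count

theorem sum_add_eq_sum_add_of_forall_ne {ι M : Type} [Fintype ι] [DecidableEq ι]
    [AddCommMonoid M] {f g : ι → M} (i₀ : ι) (h : ∀ i ≠ i₀, f i = g i) :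
    ∑ i, f i + g i₀ = ∑ i, g i + f i₀ := by
  rw [← add_sum_erase _ f (mem_univ i₀), ← add_sum_erase _ g (mem_univ i₀),
    sum_congr rfl fun i hi => h i (ne_of_mem_erase hi), add_right_comm, add_assoc, add_comm]

theorem eq_zero_and_eq_zero_of_le_mul_add_mul {n a a' b b' d : ℕ} (ha : a + a' = n + 1)
    (hb : b + b' = 10 * n) (hle : a' ≤ a) (hd : d < n)
    (h : (n + 1) * (10 * n) ≤ a' * d + (a * b' + b * a') + 1) : a' = 0 ∧ b = 0 := by
  have hexp : (n + 1) * (10 * n) = (a + a') * (b + b') := by rw [ha, hb]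
  have hd' : a' * (d + 1) ≤ a' * n := Nat.mul_le_mul_left a' hd
  have hab : a' * b ≤ a * b := Nat.mul_le_mul_right b hle
  have ha' : a' = 0 := by
    by_contra h0
    have h1 : a' * (b + b') ≤ a' * d + 1 := by nlinarith
    have h2 : 0 < a' * n := Nat.mul_pos (Nat.pos_of_ne_zero h0) (by omega)
    rw [hb] at h1
    nlinarith
  subst ha'
  exact ⟨rfl, by nlinarith⟩

theorem mul_add_mul_add_le_mul_self {M p p' q q' : ℕ} (hp : p + p' = M) (hq : q + q' = M)
    (h : 0 < p ∧ 0 < q ∨ 0 < p' ∧ 0 < q') : p * q' + q * p' + M ≤ M * M := by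
  have hexp : M * M = (p + p') * (q + q') := by rw [hp, hq]
  suffices M ≤ p * q + p' * q' by nlinarith
  rcases h with ⟨h1, h2⟩ | ⟨h1, h2⟩
  · rcases Nat.eq_zero_or_pos q' with h3 | h3
    · subst h3; nlinarith
    · nlinarith
  · rcases Nat.eq_zero_or_pos q with h3 | h3
    · subst h3; nlinarith
    · nlinarith

section Vertices

variable {V : Type} {n0 : ℕ}

def GPV.equivSum :
    (V × Fin (n0 + 1)) ⊕ (V × Fin (10 * n0)) ⊕ Fin (100 * n0 * n0) ⊕ Fin (100 * n0 * n0) ⊕ Unit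
      ≃ GPV V n0 where
  toFun
    | .inl (u, i) => .L u i
    | .inr (.inl (u, j)) => .R u j
    | .inr (.inr (.inl k)) => .X k
    | .inr (.inr (.inr (.inl k))) => .Y k
    | .inr (.inr (.inr (.inr _))) => .W
  invFun
    | .L u i => .inl (u, i)
    | .R u j => .inr (.inl (u, j))
    | .X k => .inr (.inr (.inl k))
    | .Y k => .inr (.inr (.inr (.inl k)))
    | .W => .inr (.inr (.inr (.inr ())))
  left_inv x := by rcases x with ⟨u, i⟩ | ⟨u, j⟩ | k | k | ⟨⟩ <;> rfl
  right_inv a := by cases a <;> rfl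

theorem GPV.sum_univ [Fintype V] {M : Type} [AddCommMonoid M] (f : GPV V n0 → M) :
    ∑ a, f a = ∑ u, ∑ i, f (.L u i) + ∑ u, ∑ j, f (.R u j) + ∑ k, f (.X k) + ∑ k, f (.Y k)
      + f .W := by
  rw [← GPV.equivSum.sum_comp]
  simp only [Fintype.sum_sum_type, Fintype.sum_prod_type, Fintype.sum_unique, add_assoc]
  rfl

def GadgetAligned (S : Finset (GPV V n0)) (u : V) : Prop :=
  (∀ i, GPV.L u i ∈ S) ∧ (∀ j, GPV.R u j ∉ S) ∨ (∀ i, GPV.L u i ∉ S) ∧ (∀ j, GPV.R u j ∈ S)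

end Vertices

section Gadgets

variable {V : Type} [DecidableEq V] {n0 : ℕ} {S T : Finset (GPV V n0)}

theorem Gp_adj_L_L (G : SimpleGraph V) [DecidableRel G.Adj] {u v : V} {i j : Fin (n0 + 1)} :
    (Gp n0 G).Adj (.L u i) (.L v j) ↔ G.Adj u v ∧ i = j := by
  simp only [Gp, SimpleGraph.fromRel_adj, gpRel, ne_eq, GPV.L.injEq, Bool.and_eq_true,
    decide_eq_true_eq, beq_iff_eq, Fin.val_inj]
  constructor
  · rintro ⟨-, ⟨h, rfl⟩ | ⟨h, rfl⟩⟩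
    exacts [⟨h, rfl⟩, ⟨h.symm, rfl⟩]
  · rintro ⟨h, rfl⟩
    exact ⟨fun h' => G.irrefl (h'.1 ▸ h), .inl ⟨h, rfl⟩⟩

def gadgetCut (S : Finset (GPV V n0)) (u : V) : ℕ :=
  inCount S (GPV.L u) * outCount S (GPV.R u) + inCount S (GPV.R u) * outCount S (GPV.L u)

def frameCut (S : Finset (GPV V n0)) : ℕ :=
  inCount S GPV.X * outCount S GPV.Y + inCount S GPV.Y * outCount S GPV.X

theorem gadgetCut_congr {u : V} (hL : ∀ i, GPV.L u i ∈ S ↔ GPV.L u i ∈ T)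
    (hR : ∀ j, GPV.R u j ∈ S ↔ GPV.R u j ∈ T) : gadgetCut S u = gadgetCut T u := by
  simp only [gadgetCut, inCount_congr _ _ hL, outCount_congr _ _ hL, inCount_congr _ _ hR,
    outCount_congr _ _ hR]

theorem frameCut_congr (hX : ∀ k, GPV.X k ∈ S ↔ GPV.X k ∈ T)
    (hY : ∀ k, GPV.Y k ∈ S ↔ GPV.Y k ∈ T) : frameCut S = frameCut T := by
  simp only [frameCut, inCount_congr _ _ hX, outCount_congr _ _ hX, inCount_congr _ _ hY,
    outCount_congr _ _ hY]

theorem gadgetCut_eq_of_gadgetAligned {u : V} (h : GadgetAligned S u) :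
    gadgetCut S u = (n0 + 1) * (10 * n0) := by
  have hL := inCount_add_outCount S (GPV.L u)
  have hR := inCount_add_outCount S (GPV.R u)
  rw [Fintype.card_fin] at hL hR
  rcases h with ⟨h1, h2⟩ | ⟨h1, h2⟩
  · rw [(outCount_eq_zero _ _).2 h1] at hL
    rw [(inCount_eq_zero _ _).2 h2] at hR
    rw [gadgetCut, (outCount_eq_zero _ _).2 h1, (inCount_eq_zero _ _).2 h2]
    simp_all
  · rw [(inCount_eq_zero _ _).2 h1] at hL
    rw [(outCount_eq_zero _ _).2 h2] at hR
    rw [gadgetCut, (outCount_eq_zero _ _).2 h2, (inCount_eq_zero _ _).2 h1]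
    simp_all [mul_comm]

theorem frameCut_le : frameCut S ≤ 100 * n0 * n0 * (100 * n0 * n0) := by
  have hX := inCount_add_outCount S GPV.X
  have hY := inCount_add_outCount S GPV.Y
  rw [Fintype.card_fin] at hX hY
  calc frameCut S
      ≤ (inCount S GPV.X + outCount S GPV.X) * (inCount S GPV.Y + outCount S GPV.Y) := by
        rw [frameCut]; nlinarith
    _ = _ := by rw [hX, hY]

theorem frameCut_eq_of_forall (hX : ∀ k, GPV.X k ∈ S) (hY : ∀ k, GPV.Y k ∉ S) :
    frameCut S = 100 * n0 * n0 * (100 * n0 * n0) := by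
  have hX' := inCount_add_outCount S GPV.X
  have hY' := inCount_add_outCount S GPV.Y
  rw [Fintype.card_fin, (outCount_eq_zero _ _).2 hX] at hX'
  rw [Fintype.card_fin, (inCount_eq_zero _ _).2 hY] at hY'
  rw [frameCut, (outCount_eq_zero _ _).2 hX, (inCount_eq_zero _ _).2 hY]
  simp_all

theorem frameCut_add_le_of_mem_iff_mem (hn0 : 0 < n0)
    (h : xzero V n0 hn0 ∈ S ↔ yzero V n0 hn0 ∈ S) :
    frameCut S + 100 * n0 * n0 ≤ 100 * n0 * n0 * (100 * n0 * n0) := by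
  have hX := inCount_add_outCount S GPV.X
  have hY := inCount_add_outCount S GPV.Y
  rw [Fintype.card_fin] at hX hY
  refine mul_add_mul_add_le_mul_self hX hY ?_
  by_cases hx : xzero V n0 hn0 ∈ S
  · exact .inl ⟨inCount_pos _ _ hx, inCount_pos _ _ (h.1 hx)⟩
  · exact .inr ⟨outCount_pos _ _ hx, outCount_pos _ _ (mt h.2 hx)⟩

end Gadgets

section Decomposition

variable {V : Type} [Fintype V] [DecidableEq V] {n0 : ℕ} (G : SimpleGraph V)
  [DecidableRel G.Adj] {S T : Finset (GPV V n0)}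

def layer (S : Finset (GPV V n0)) (i : Fin (n0 + 1)) : Finset V := {u | GPV.L u i ∈ S}

def projection (S : Finset (GPV V n0)) : Finset V := {u | ∀ i, GPV.L u i ∈ S}

def syncCut (S : Finset (GPV V n0)) : ℕ := ∑ i, cutSet G (layer S i)

def hubCut (hn0 : 0 < n0) (S : Finset (GPV V n0)) : ℕ :=
  ∑ u, (∑ i, (cross S (xzero V n0 hn0) (.L u i) + cross S (yzero V n0 hn0) (.L u i))
    + ∑ j, (cross S (xzero V n0 hn0) (.R u j) + cross S (yzero V n0 hn0) (.R u j)))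

def controllerCut (hn0 : 0 < n0) (S : Finset (GPV V n0)) : ℕ :=
  cross S (xzero V n0 hn0) .W + cross S (yzero V n0 hn0) .W + ∑ u, cross S .W (.L u 0)

theorem syncCut_eq_sum (S : Finset (GPV V n0)) :
    syncCut G S = ∑ u, ∑ i, ∑ v, if G.Adj u v ∧ GPV.L u i ∈ S ∧ GPV.L v i ∉ S then 1 else 0 := by
  simp only [syncCut, cutSet_eq_sum, layer, mem_filter, mem_univ, true_and]
  exact sum_comm

theorem cutSet_Gp (hn0 : 0 < n0) (S : Finset (GPV V n0)) :
    cutSet (Gp n0 G) S = syncCut G S + ∑ u, gadgetCut S u + frameCut S + hubCut hn0 S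
      + controllerCut hn0 S := by
  have hk : ∀ k : Fin (100 * n0 * n0), (k : ℕ) = 0 ↔ k = ⟨0, by positivity⟩ :=
    fun _ => by simp [Fin.ext_iff]
  rw [cutSet_eq_sum, syncCut_eq_sum]
  -- split the sum over ordered pairs into the blocks of constructor pairs, each of whose
  -- adjacency is read off `gpRel`
  simp only [gadgetCut, frameCut, hubCut, controllerCut, xzero, yzero]
  simp only [inCount_mul_outCount, cross_eq_ite_add_ite, GPV.sum_univ, Gp_adj_L_L]
  simp only [Gp, SimpleGraph.fromRel_adj, gpRel, ne_eq, reduceCtorEq, not_false_eq_true,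
    true_and, beq_iff_eq, Bool.false_eq_true, or_false, false_or, and_false, false_and,
    if_false, sum_const_zero, add_zero, hk, Fin.val_eq_zero_iff, ite_and, sum_ite_eq, sum_ite_eq',
    mem_univ, if_true, and_assoc, sum_add_distrib, sum_ite_irrel]
  ring

theorem syncCut_congr (h : ∀ u i, GPV.L u i ∈ S ↔ GPV.L u i ∈ T) :
    syncCut G S = syncCut G T := by
  simp only [syncCut, layer, h]

theorem syncCut_le_of_layer_eq_insert (u₀ : V) (h : ∀ i, layer T i = insert u₀ (layer S i)) :
    syncCut G S ≤ syncCut G T + outCount S (GPV.L u₀) * G.degree u₀ := by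
  calc syncCut G S
      ≤ ∑ i, (cutSet G (layer T i) + if GPV.L u₀ i ∉ S then G.degree u₀ else 0) := by
        refine sum_le_sum fun i _ => ?_
        rw [h]
        split_ifs with hi
        · rw [insert_eq_of_mem (by simpa [layer] using hi), add_zero]
        · exact cutSet_le_cutSet_insert_add_degree G _ u₀
    _ = syncCut G T + outCount S (GPV.L u₀) * G.degree u₀ := by
        rw [sum_add_distrib, ← sum_filter, sum_const, smul_eq_mul, syncCut, outCount]

theorem syncCut_eq_of_gadgetAligned (h : ∀ u, GadgetAligned S u) :
    syncCut G S = (n0 + 1) * cutSet G (projection S) := by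
  have hlayer : ∀ i, layer S i = projection S := fun i => by
    ext u
    simp only [layer, projection, mem_filter, mem_univ, true_and]
    rcases h u with ⟨hL, -⟩ | ⟨hL, -⟩ <;> simp [hL]
  simp [syncCut, hlayer]

theorem hubCut_eq_of_mem_iff_not_mem (hn0 : 0 < n0) (hV : Fintype.card V = n0)
    (h : xzero V n0 hn0 ∈ S ↔ yzero V n0 hn0 ∉ S) : hubCut hn0 S = n0 * (11 * n0 + 1) := by
  simp only [hubCut, cross_add_cross S h, sum_const, card_univ, Fintype.card_fin, hV, smul_eq_mul,
    mul_one]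
  ring

theorem hubCut_le (hn0 : 0 < n0) (hV : Fintype.card V = n0) :
    hubCut hn0 S ≤ 2 * (n0 * (11 * n0 + 1)) := by
  calc hubCut hn0 S
      ≤ ∑ _u : V, (∑ _i : Fin (n0 + 1), (1 + 1) + ∑ _j : Fin (10 * n0), (1 + 1)) := by
        unfold hubCut; gcongr <;> apply cross_le_one
    _ = _ := by simp [hV]; ring

theorem controllerCut_eq_of_mem_iff_not_mem (hn0 : 0 < n0)
    (h : xzero V n0 hn0 ∈ S ↔ yzero V n0 hn0 ∉ S) :
    controllerCut hn0 S = 1 + ∑ u, cross S .W (.L u 0) := by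
  rw [controllerCut, cross_add_cross S h]

theorem controllerCut_le (hn0 : 0 < n0) (hV : Fintype.card V = n0) :
    controllerCut hn0 S ≤ n0 + 2 := by
  have h1 := cross_le_one S (xzero V n0 hn0) .W
  have h2 := cross_le_one S (yzero V n0 hn0) .W
  have h3 := sum_cross_le S (fun u : V => GPV.L u 0) .W
  rw [hV] at h3
  rw [controllerCut]
  omega

theorem cutSet_Gp_of_gadgetAligned (hn0 : 0 < n0) (hV : Fintype.card V = n0)
    (hxy : xzero V n0 hn0 ∈ S ↔ yzero V n0 hn0 ∉ S) (h : ∀ u, GadgetAligned S u) :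
    cutSet (Gp n0 G) S = (n0 + 1) * cutSet G (projection S) + n0 * ((n0 + 1) * (10 * n0))
      + frameCut S + n0 * (11 * n0 + 1) + controllerCut hn0 S := by
  have hgadget : ∀ u, gadgetCut S u = (n0 + 1) * (10 * n0) :=
    fun u => gadgetCut_eq_of_gadgetAligned (h u)
  simp only [cutSet_Gp G hn0, syncCut_eq_of_gadgetAligned G h, hgadget, sum_const, card_univ, hV,
    smul_eq_mul, hubCut_eq_of_mem_iff_not_mem hn0 hV hxy]

end Decomposition

section Maximal

variable {V : Type} [Fintype V] [DecidableEq V] {n0 : ℕ} (G : SimpleGraph V) [DecidableRel G.Adj]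
  {S : Finset (GPV V n0)}

theorem xzero_mem_iff_yzero_not_mem_of_isMaxCut (hn0 : 0 < n0) (hV : Fintype.card V = n0)
    (hmax : IsMaxCut (Gp n0 G) S) : xzero V n0 hn0 ∈ S ↔ yzero V n0 hn0 ∉ S := by
  by_contra hsame
  set T := (S ∪ univ.image GPV.X) \ univ.image GPV.Y
  have hTX : ∀ k, GPV.X k ∈ T := by simp [T]
  have hTY : ∀ k, GPV.Y k ∉ T := by simp [T]
  have hT := hmax T
  rw [cutSet_Gp G hn0, cutSet_Gp G hn0, syncCut_congr G (T := S) (by simp [T]),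
    sum_congr rfl fun u _ => (gadgetCut_congr (by simp [T]) (by simp [T]) :
      gadgetCut T u = gadgetCut S u),
    frameCut_eq_of_forall hTX hTY,
    hubCut_eq_of_mem_iff_not_mem hn0 hV (by simp [xzero, yzero, hTX, hTY])] at hT
  have h1 := frameCut_add_le_of_mem_iff_mem hn0 (S := S) (by tauto)
  have h2 := hubCut_le hn0 hV (S := S)
  have h3 := controllerCut_le hn0 hV (S := S)
  nlinarith

def moveGadget (S : Finset (GPV V n0)) (u₀ : V) : Finset (GPV V n0) :=
  (S ∪ univ.image (GPV.L u₀)) \ univ.image (GPV.R u₀)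

theorem cutSet_Gp_add_le_cutSet_Gp_moveGadget (hn0 : 0 < n0) (hV : Fintype.card V = n0)
    (hxy : xzero V n0 hn0 ∈ S ↔ yzero V n0 hn0 ∉ S) (u₀ : V) :
    cutSet (Gp n0 G) S + (n0 + 1) * (10 * n0) ≤ cutSet (Gp n0 G) (moveGadget S u₀)
      + outCount S (GPV.L u₀) * G.degree u₀ + gadgetCut S u₀ + 1 := by
  set T := moveGadget S u₀
  have hTxy : xzero V n0 hn0 ∈ T ↔ yzero V n0 hn0 ∉ T := by
    simpa [T, moveGadget, xzero, yzero] using hxy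
  have hsync := syncCut_le_of_layer_eq_insert G (S := S) (T := T) u₀ fun i => by
    ext u; by_cases hu : u = u₀ <;> simp [T, moveGadget, layer, hu, Ne.symm]
  have hgadget :
      ∑ u, gadgetCut S u + (n0 + 1) * (10 * n0) = ∑ u, gadgetCut T u + gadgetCut S u₀ := by
    rw [← gadgetCut_eq_of_gadgetAligned (S := T) (u := u₀)
      (.inl ⟨by simp [T, moveGadget], by simp [T, moveGadget]⟩)]
    exact sum_add_eq_sum_add_of_forall_ne u₀ fun u hu =>
      gadgetCut_congr (by simp [T, moveGadget, hu.symm]) (by simp [T, moveGadget, hu.symm])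
  have hframe : frameCut T = frameCut S :=
    frameCut_congr (by simp [T, moveGadget]) (by simp [T, moveGadget])
  have hcontrol : controllerCut hn0 S ≤ controllerCut hn0 T + 1 := by
    have hsum := sum_add_eq_sum_add_of_forall_ne (f := fun u => cross S .W (.L u 0))
      (g := fun u => cross T .W (.L u 0)) u₀ fun u hu => by simp [cross, T, moveGadget, hu.symm]
    have := cross_le_one S .W (.L u₀ 0)
    rw [controllerCut_eq_of_mem_iff_not_mem hn0 hxy, controllerCut_eq_of_mem_iff_not_mem hn0 hTxy]
    omega
  rw [cutSet_Gp G hn0, cutSet_Gp G hn0, hframe, hubCut_eq_of_mem_iff_not_mem hn0 hV hxy,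
    hubCut_eq_of_mem_iff_not_mem hn0 hV hTxy]
  omega

theorem L_mem_and_R_not_mem_of_isMaxCut (hn0 : 0 < n0) (hV : Fintype.card V = n0)
    (hmax : IsMaxCut (Gp n0 G) S) (hxy : xzero V n0 hn0 ∈ S ↔ yzero V n0 hn0 ∉ S) (u₀ : V)
    (hle : outCount S (GPV.L u₀) ≤ inCount S (GPV.L u₀)) :
    (∀ i, GPV.L u₀ i ∈ S) ∧ ∀ j, GPV.R u₀ j ∉ S := by
  have hmove := cutSet_Gp_add_le_cutSet_Gp_moveGadget G hn0 hV hxy u₀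
  have hT := hmax (moveGadget S u₀)
  rw [gadgetCut] at hmove
  have hL := inCount_add_outCount S (GPV.L u₀)
  have hR := inCount_add_outCount S (GPV.R u₀)
  rw [Fintype.card_fin] at hL hR
  obtain ⟨hout, hin⟩ := eq_zero_and_eq_zero_of_le_mul_add_mul hL hR hle
    (hV ▸ G.degree_lt_card_verts u₀) (by omega)
  exact ⟨(outCount_eq_zero _ _).1 hout, (inCount_eq_zero _ _).1 hin⟩

theorem gadgetAligned_of_isMaxCut (hn0 : 0 < n0) (hV : Fintype.card V = n0)
    (hmax : IsMaxCut (Gp n0 G) S) (hxy : xzero V n0 hn0 ∈ S ↔ yzero V n0 hn0 ∉ S) (u : V) :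
    GadgetAligned S u := by
  rcases le_total (outCount S (GPV.L u)) (inCount S (GPV.L u)) with hle | hle
  · exact .inl (L_mem_and_R_not_mem_of_isMaxCut G hn0 hV hmax hxy u hle)
  · have hxyc : xzero V n0 hn0 ∈ Sᶜ ↔ yzero V n0 hn0 ∉ Sᶜ := by simp only [mem_compl]; tauto
    obtain ⟨hL, hR⟩ := L_mem_and_R_not_mem_of_isMaxCut G hn0 hV hmax.compl hxyc u
      (by rwa [outCount_compl, inCount_compl])
    exact .inr ⟨fun i => by simpa using hL i, fun j => by simpa using hR j⟩

theorem cutSet_Gp_le_of_isMaxCut (hn0 : 0 < n0) (hV : Fintype.card V = n0)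
    (hmax : IsMaxCut (Gp n0 G) S) :
    cutSet (Gp n0 G) S ≤ (n0 + 1) * cutSet G (projection S) + n0 * ((n0 + 1) * (10 * n0))
      + 100 * n0 * n0 * (100 * n0 * n0) + n0 * (11 * n0 + 1) + (n0 + 1) := by
  have hxy := xzero_mem_iff_yzero_not_mem_of_isMaxCut G hn0 hV hmax
  have hcontrol := sum_cross_le S (fun u : V => GPV.L u 0) .W
  rw [cutSet_Gp_of_gadgetAligned G hn0 hV hxy (gadgetAligned_of_isMaxCut G hn0 hV hmax hxy),
    controllerCut_eq_of_mem_iff_not_mem hn0 hxy]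
  have := frameCut_le (S := S)
  omega

end Maximal

section Lift

variable {V : Type} [Fintype V] [DecidableEq V] {n0 : ℕ}

def canonicalLift (T : Finset V) : Finset (GPV V n0) :=
  T.biUnion (fun u => univ.image (GPV.L u)) ∪ Tᶜ.biUnion (fun u => univ.image (GPV.R u)) ∪
    univ.image GPV.X

variable (T : Finset V)

@[simp] theorem L_mem_canonicalLift {u : V} {i : Fin (n0 + 1)} :
    GPV.L u i ∈ canonicalLift T ↔ u ∈ T := by
  simp [canonicalLift]

@[simp] theorem R_mem_canonicalLift {u : V} {j : Fin (10 * n0)} :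
    GPV.R u j ∈ canonicalLift T ↔ u ∉ T := by
  simp [canonicalLift]

@[simp] theorem X_mem_canonicalLift (k : Fin (100 * n0 * n0)) : GPV.X k ∈ canonicalLift T := by
  simp [canonicalLift]

@[simp] theorem Y_not_mem_canonicalLift (k : Fin (100 * n0 * n0)) :
    GPV.Y k ∉ canonicalLift T := by
  simp [canonicalLift]

theorem le_cutSet_Gp_canonicalLift (G : SimpleGraph V) [DecidableRel G.Adj] (hn0 : 0 < n0)
    (hV : Fintype.card V = n0) :
    (n0 + 1) * cutSet G T + n0 * ((n0 + 1) * (10 * n0)) + 100 * n0 * n0 * (100 * n0 * n0)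
      + n0 * (11 * n0 + 1) + 1 ≤ cutSet (Gp n0 G) (canonicalLift T) := by
  have hxy : xzero V n0 hn0 ∈ canonicalLift T ↔ yzero V n0 hn0 ∉ canonicalLift T := by
    simp [xzero, yzero]
  have haligned (u : V) : GadgetAligned (canonicalLift (n0 := n0) T) u := by
    by_cases hu : u ∈ T
    · exact .inl ⟨by simp [hu], by simp [hu]⟩
    · exact .inr ⟨by simp [hu], by simp [hu]⟩
  have hproj : projection (canonicalLift (n0 := n0) T) = T := by
    ext; simp [projection]
  rw [cutSet_Gp_of_gadgetAligned G hn0 hV hxy haligned, hproj,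
    frameCut_eq_of_forall (X_mem_canonicalLift T) (Y_not_mem_canonicalLift T),
    controllerCut_eq_of_mem_iff_not_mem hn0 hxy]
  omega

end Lift

theorem projection_of_maxcut_is_maxcut
    (n0 : ℕ) (hn0 : 0 < n0) {V : Type} [Fintype V] [DecidableEq V]
    (hV : Fintype.card V = n0) (G : SimpleGraph V) [DecidableRel G.Adj]
    (S' : Finset (GPV V n0)) (hS' : cutSet (Gp n0 G) S' = maxCut (Gp n0 G)) :
    cutSet G (Finset.univ.filter (fun u : V => ∀ i, GPV.L u i ∈ S')) = maxCut G := by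
  have hmax := (isMaxCut_iff_cutSet_eq_maxCut _ S').2 hS'
  refine (isMaxCut_iff_cutSet_eq_maxCut G _).1 fun T => ?_
  have hlift := (le_cutSet_Gp_canonicalLift T G hn0 hV).trans (hmax (canonicalLift T))
  have hproj := cutSet_Gp_le_of_isMaxCut G hn0 hV hmax
  have : (n0 + 1) * cutSet G T < (n0 + 1) * (cutSet G (projection S') + 1) := by nlinarith
  exact Nat.le_of_lt_succ (Nat.lt_of_mul_lt_mul_left this)

end QAOA
end
end

section
/- In the graph G', the degrees of the special vertices satisfy deg(x_0) = deg(y_0) = 100n0² + n0·(11n0+1) + 1, and for every edge {a,b} of G' with {a,b} ≠ {x_0,y_0} one has deg(a) + deg(b) < deg(x_0) + deg(y_0). In particular, deg(x_0) + deg(y_0) − 2 = 200n0² + 2n0·(11n0+1). -/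
/-!
STATEMENT 15: in G′, deg(x₀) = deg(y₀) = 100 n₀² + n₀(11 n₀ + 1) + 1; every edge
{a,b} ≠ {x₀,y₀} satisfies deg(a) + deg(b) < deg(x₀) + deg(y₀); and
deg(x₀) + deg(y₀) - 2 = 200 n₀² + 2 n₀(11 n₀ + 1).
-/
noncomputable section

/-! `x₀` is adjacent to every vertex outside `X` and `y₀` to every vertex outside `Y`, so both have
degree `|V(G')| - 100 n0²`. Every other vertex has degree at most `100 n0²`: a frame vertex
`x_i` (`i ≠ 0`) only sees `Y`, and a gadget vertex or `w` only sees gadget vertices, `x₀`, `y₀`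
and `w`. So every edge other than `x₀y₀` has an endpoint of degree at most `100 n0²`. -/

theorem SimpleGraph.degree_add_degree_lt_of_adj {W : Type*} {H : SimpleGraph W} [H.LocallyFinite]
    {x y : W} {d : ℕ} (hx : d < H.degree x) (hy : d < H.degree y)
    (hle : ∀ v, v ≠ x → v ≠ y → H.degree v ≤ d) {a b : W} (hab : H.Adj a b)
    (hne : ¬(a = x ∧ b = y ∨ a = y ∧ b = x)) :
    H.degree a + H.degree b < H.degree x + H.degree y := by
  have hba : b ≠ a := hab.ne.symm
  rcases eq_or_ne a x with rfl | hax
  · have := hle b (by tauto) (by tauto)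
    omega
  rcases eq_or_ne a y with rfl | hay
  · have := hle b (by tauto) (by tauto)
    omega
  have ha := hle a hax hay
  rcases eq_or_ne b x with rfl | hbx
  · omega
  rcases eq_or_ne b y with rfl | hby
  · omega
  have := hle b hbx hby
  omega

namespace QAOA

open Finset SimpleGraph

namespace GPV

variable {V : Type} {n0 : ℕ}

def equivSum_s15 : GPV V n0 ≃ (V × Fin (n0 + 1)) ⊕ (V × Fin (10 * n0)) ⊕
    Fin (100 * n0 * n0) ⊕ Fin (100 * n0 * n0) ⊕ Unit where
  toFun
    | .L u i => .inl (u, i)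
    | .R u i => .inr (.inl (u, i))
    | .X i => .inr (.inr (.inl i))
    | .Y i => .inr (.inr (.inr (.inl i)))
    | .W => .inr (.inr (.inr (.inr ())))
  invFun := Sum.elim (fun p => .L p.1 p.2) <| Sum.elim (fun p => .R p.1 p.2) <|
    Sum.elim .X <| Sum.elim .Y fun _ => .W
  left_inv v := by cases v <;> rfl
  right_inv s := by rcases s with _ | _ | _ | _ | _ <;> rfl

theorem card_eq [Fintype V] :
    Fintype.card (GPV V n0) =
      Fintype.card V * (n0 + 1) + Fintype.card V * (10 * n0) + 2 * (100 * n0 * n0) + 1 := by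
  rw [Fintype.card_congr equivSum_s15]
  simp only [Fintype.card_sum, Fintype.card_prod, Fintype.card_fin, Fintype.card_unit]
  ring

def swapXY : GPV V n0 → GPV V n0
  | .X i => .Y i
  | .Y i => .X i
  | v => v

theorem swapXY_involutive : Function.Involutive (swapXY : GPV V n0 → GPV V n0) := by
  intro v; cases v <;> rfl

variable [DecidableEq V]

def frame : Finset (GPV V n0) := univ.image GPV.X ∪ univ.image GPV.Y

theorem card_frame : #(frame : Finset (GPV V n0)) = 2 * (100 * n0 * n0) := by
  rw [frame, card_union_of_disjoint (by simp [Finset.disjoint_left]),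
    card_image_of_injective _ fun _ _ => X.inj, card_image_of_injective _ fun _ _ => Y.inj]
  simp [two_mul]

end GPV

variable {V : Type} [DecidableEq V] (n0 : ℕ) (G : SimpleGraph V) [DecidableRel G.Adj]

def swapXYIso : Gp n0 G ≃g Gp n0 G where
  toEquiv := GPV.swapXY_involutive.toPerm _
  map_rel_iff' {a b} := by
    cases a <;> cases b <;> simp [Gp, gpRel, GPV.swapXY]

variable [Fintype V]

theorem neighborFinset_xzero (hn0 : 0 < n0) :
    (Gp n0 G).neighborFinset (xzero V n0 hn0) = (univ.image GPV.X)ᶜ := by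
  ext b
  rw [mem_neighborFinset]
  cases b <;> simp [Gp, gpRel, xzero]

theorem degree_xzero (hn0 : 0 < n0) :
    (Gp n0 G).degree (xzero V n0 hn0) =
      100 * n0 * n0 + Fintype.card V * (n0 + 1) + Fintype.card V * (10 * n0) + 1 := by
  have hX : #(univ.image (GPV.X : _ → GPV V n0)) = 100 * n0 * n0 := by
    rw [card_image_of_injective _ fun _ _ => GPV.X.inj, card_univ, Fintype.card_fin]
  have hcompl := card_add_card_compl (univ.image (GPV.X : _ → GPV V n0))
  rw [hX, GPV.card_eq] at hcompl
  rw [← card_neighborFinset_eq_degree, neighborFinset_xzero]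
  omega

theorem degree_yzero (hn0 : 0 < n0) :
    (Gp n0 G).degree (yzero V n0 hn0) = (Gp n0 G).degree (xzero V n0 hn0) :=
  (swapXYIso n0 G).degree_eq (xzero V n0 hn0)

theorem degree_X_le {i : Fin (100 * n0 * n0)} (hi : (i : ℕ) ≠ 0) :
    (Gp n0 G).degree (GPV.X i) ≤ 100 * n0 * n0 := by
  have hsub : (Gp n0 G).neighborFinset (GPV.X i) ⊆ univ.image GPV.Y := by
    intro b hb
    rw [mem_neighborFinset] at hb
    cases b <;> simp_all [Gp, gpRel]
  rw [← card_neighborFinset_eq_degree]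
  exact (card_le_card hsub).trans (card_image_le.trans (by simp))

theorem degree_Y_le {i : Fin (100 * n0 * n0)} (hi : (i : ℕ) ≠ 0) :
    (Gp n0 G).degree (GPV.Y i) ≤ 100 * n0 * n0 :=
  (swapXYIso n0 G).degree_eq (GPV.X i) ▸ degree_X_le n0 G hi

theorem degree_le_of_notMem_frame (hn0 : 0 < n0) {v : GPV V n0} (hv : v ∉ GPV.frame) :
    (Gp n0 G).degree v ≤ Fintype.card V * (n0 + 1) + Fintype.card V * (10 * n0) + 3 := by
  have hsub : (Gp n0 G).neighborFinset v ⊆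
      GPV.frameᶜ ∪ {xzero V n0 hn0, yzero V n0 hn0} := by
    intro b hb
    rw [mem_neighborFinset] at hb
    cases v <;> cases b <;> simp [GPV.frame, Gp, gpRel, xzero, yzero] at hv hb ⊢ <;>
      exact Fin.ext hb
  have hcompl := card_add_card_compl (GPV.frame : Finset (GPV V n0))
  rw [GPV.card_eq, GPV.card_frame] at hcompl
  rw [← card_neighborFinset_eq_degree]
  calc #((Gp n0 G).neighborFinset v) ≤ #(GPV.frameᶜ ∪ {xzero V n0 hn0, yzero V n0 hn0}) :=
        card_le_card hsub
    _ ≤ #GPV.frameᶜ + 2 := (card_union_le _ _).trans (by grw [card_le_two])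
    _ = _ := by omega

theorem degree_le_of_ne_xzero_of_ne_yzero (hn0 : 0 < n0) (hV : Fintype.card V = n0)
    {v : GPV V n0} (hx : v ≠ xzero V n0 hn0) (hy : v ≠ yzero V n0 hn0) :
    (Gp n0 G).degree v ≤ 100 * n0 * n0 := by
  have hgadget : Fintype.card V * (n0 + 1) + Fintype.card V * (10 * n0) + 3 ≤ 100 * n0 * n0 := by
    rw [hV]; nlinarith
  cases v with
  | X i => exact degree_X_le n0 G fun h => hx (by simp [xzero, Fin.ext_iff, h])
  | Y i => exact degree_Y_le n0 G fun h => hy (by simp [yzero, Fin.ext_iff, h])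
  | L | R | W => exact (degree_le_of_notMem_frame n0 G hn0 (by simp [GPV.frame])).trans hgadget

theorem special_vertices_dominate_degrees
    (n0 : ℕ) (hn0 : 0 < n0) {V : Type} [Fintype V] [DecidableEq V]
    (hV : Fintype.card V = n0) (G : SimpleGraph V) [DecidableRel G.Adj] :
    (Gp n0 G).degree (xzero V n0 hn0) = 100 * n0 ^ 2 + n0 * (11 * n0 + 1) + 1 ∧
    (Gp n0 G).degree (yzero V n0 hn0) = 100 * n0 ^ 2 + n0 * (11 * n0 + 1) + 1 ∧
    (∀ a b : GPV V n0, (Gp n0 G).Adj a b →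
      ¬((a = xzero V n0 hn0 ∧ b = yzero V n0 hn0) ∨
        (a = yzero V n0 hn0 ∧ b = xzero V n0 hn0)) →
      (Gp n0 G).degree a + (Gp n0 G).degree b <
        (Gp n0 G).degree (xzero V n0 hn0) + (Gp n0 G).degree (yzero V n0 hn0)) ∧
    ((Gp n0 G).degree (xzero V n0 hn0) : ℤ) + ((Gp n0 G).degree (yzero V n0 hn0) : ℤ) - 2
      = 200 * (n0 : ℤ) ^ 2 + 2 * (n0 : ℤ) * (11 * (n0 : ℤ) + 1) := by
  have hx0 : (Gp n0 G).degree (xzero V n0 hn0) = 100 * n0 ^ 2 + n0 * (11 * n0 + 1) + 1 := by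
    rw [degree_xzero, hV]; ring
  have hy0 := (degree_yzero n0 G hn0).trans hx0
  have hlt : 100 * n0 * n0 < 100 * n0 ^ 2 + n0 * (11 * n0 + 1) + 1 := by nlinarith
  refine ⟨hx0, hy0, fun a b hab hne => ?_, ?_⟩
  · exact degree_add_degree_lt_of_adj (hx0 ▸ hlt) (hy0 ▸ hlt)
      (fun _ => degree_le_of_ne_xzero_of_ne_yzero n0 G hn0 hV) hab hne
  · rw [hx0, hy0]
    push_cast
    ring

end QAOA
end
end
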